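/- arXiv:1803.07539 — 7 statements merged into one kernel-verified Lean document; each statement's English description precedes it below -/
import Mathlib

section
/- For every g = ((a,b),(c,d)) in GL(2,K) with det g ∈ kˣ, one has ι(g)ᵀ · J · ι(g) = det(g) · J. Consequently ι restricts to an injective group homomorphism from H into G = GSp(4,k) whose similitude factor is λ(ι(g)) = det g. -/
/-!
Write `x = c1 x + c2 x · r` with `r = √α`. Since `1, r` are linearly independent over `k`,
identities in `K` can be compared coordinatewise, and `r² = α` gives the coordinates of a product:
`(a₁ + a₂r)(b₁ + b₂r) = (a₁b₁ + αa₂b₂) + (a₁b₂ + a₂b₁)r`. Up to conjugation by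
`diag(1,1,1,α)`, each `2×2` block of `ι(g)` is the matrix of multiplication by the corresponding
entry of `g` in the basis `(1, r)`, so `ι` is multiplicative; and the two coordinates of
`ad - bc = det g` are exactly the relations that make `ι(g)ᵀ J ι(g) = det(g) · J` hold entrywise.
-/

open Matrix

/-- The standard symplectic matrix `J = ((0,E₂),(−E₂,0))` of `GSp(4)`. -/
def J4 (k : Type*) [Field k] : Matrix (Fin 4) (Fin 4) k :=
  !![0, 0, 1, 0; 0, 0, 0, 1; -1, 0, 0, 0; 0, -1, 0, 0]

/-- Membership in `G = GSp(4,k)`: an invertible matrix `g` with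
`gᵀ J g = λ(g)·J` for some `λ(g) ∈ kˣ`. -/
def IsGSp {k : Type*} [Field k] (g : Matrix (Fin 4) (Fin 4) k) : Prop :=
  IsUnit g.det ∧ ∃ lam : k, lam ≠ 0 ∧ gᵀ * J4 k * g = lam • J4 k

/-- The embedding `ι : H → GL(4,k)`, written in terms of the coefficient
functions `c1, c2 : K → k` giving the expansion `x = c1 x + c2 x · √α`. -/
def iota {k K : Type*} [Field k] [Field K] (α : k) (c1 c2 : K → k)
    (m : Matrix (Fin 2) (Fin 2) K) : Matrix (Fin 4) (Fin 4) k :=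
  !![c1 (m 0 0), c2 (m 0 0) * α, c1 (m 0 1), c2 (m 0 1);
     c2 (m 0 0), c1 (m 0 0), c2 (m 0 1), c1 (m 0 1) / α;
     c1 (m 1 0), c2 (m 1 0) * α, c1 (m 1 1), c2 (m 1 1);
     c2 (m 1 0) * α, c1 (m 1 0) * α, c2 (m 1 1) * α, c1 (m 1 1)]

/-- Membership in `H = {g ∈ GL(2,K) : det g ∈ kˣ}`. -/
def InH {k K : Type*} [Field k] [Field K] [Algebra k K]
    (m : Matrix (Fin 2) (Fin 2) K) : Prop :=
  ∃ d : k, d ≠ 0 ∧ m.det = algebraMap k K d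

section Coordinates

variable {k K : Type*} [Field k] [Field K] [Algebra k K] {α : k} {r : K} {c1 c2 : K → k}

theorem coords_eq_of_eq
    (hrepr : ∀ x : K, x = algebraMap k K (c1 x) + algebraMap k K (c2 x) * r)
    (hindep : ∀ y1 y2 : k, algebraMap k K y1 + algebraMap k K y2 * r = 0 → y1 = 0 ∧ y2 = 0)
    {x : K} {y1 y2 : k} (h : x = algebraMap k K y1 + algebraMap k K y2 * r) :
    c1 x = y1 ∧ c2 x = y2 := by
  have h0 := hindep (c1 x - y1) (c2 x - y2) (by
    simp only [map_sub]; linear_combination h - hrepr x)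
  exact ⟨sub_eq_zero.mp h0.1, sub_eq_zero.mp h0.2⟩

theorem eq_of_coords_eq
    (hrepr : ∀ x : K, x = algebraMap k K (c1 x) + algebraMap k K (c2 x) * r)
    {x y : K} (h1 : c1 x = c1 y) (h2 : c2 x = c2 y) : x = y := by
  rw [hrepr x, hrepr y, h1, h2]

theorem coords_add
    (hrepr : ∀ x : K, x = algebraMap k K (c1 x) + algebraMap k K (c2 x) * r)
    (hindep : ∀ y1 y2 : k, algebraMap k K y1 + algebraMap k K y2 * r = 0 → y1 = 0 ∧ y2 = 0)
    (x y : K) : c1 (x + y) = c1 x + c1 y ∧ c2 (x + y) = c2 x + c2 y := by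
  refine coords_eq_of_eq hrepr hindep ?_
  simp only [map_add]
  linear_combination hrepr x + hrepr y

theorem mul_eq_coords (hr : r * r = algebraMap k K α)
    (hrepr : ∀ x : K, x = algebraMap k K (c1 x) + algebraMap k K (c2 x) * r) (x y : K) :
    x * y = algebraMap k K (c1 x * c1 y + α * c2 x * c2 y)
      + algebraMap k K (c1 x * c2 y + c2 x * c1 y) * r := by
  conv_lhs => rw [hrepr x, hrepr y]
  simp only [map_add, map_mul]
  linear_combination (algebraMap k K (c2 x) * algebraMap k K (c2 y)) * hr

theorem coords_mul (hr : r * r = algebraMap k K α)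
    (hrepr : ∀ x : K, x = algebraMap k K (c1 x) + algebraMap k K (c2 x) * r)
    (hindep : ∀ y1 y2 : k, algebraMap k K y1 + algebraMap k K y2 * r = 0 → y1 = 0 ∧ y2 = 0)
    (x y : K) :
    c1 (x * y) = c1 x * c1 y + α * c2 x * c2 y ∧ c2 (x * y) = c1 x * c2 y + c2 x * c1 y :=
  coords_eq_of_eq hrepr hindep (mul_eq_coords hr hrepr x y)

theorem coords_mul_sub_mul (hr : r * r = algebraMap k K α)
    (hrepr : ∀ x : K, x = algebraMap k K (c1 x) + algebraMap k K (c2 x) * r)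
    (hindep : ∀ y1 y2 : k, algebraMap k K y1 + algebraMap k K y2 * r = 0 → y1 = 0 ∧ y2 = 0)
    {x y z w : K} {d : k} (h : x * w - y * z = algebraMap k K d) :
    c1 x * c1 w + α * c2 x * c2 w - (c1 y * c1 z + α * c2 y * c2 z) = d ∧
      c1 x * c2 w + c2 x * c1 w - (c1 y * c2 z + c2 y * c1 z) = 0 := by
  have h0 := hindep
    (c1 x * c1 w + α * c2 x * c2 w - (c1 y * c1 z + α * c2 y * c2 z) - d)
    (c1 x * c2 w + c2 x * c1 w - (c1 y * c2 z + c2 y * c1 z)) (by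
      simp only [map_sub]
      linear_combination mul_eq_coords hr hrepr y z - mul_eq_coords hr hrepr x w + h)
  exact ⟨sub_eq_zero.mp h0.1, h0.2⟩

end Coordinates

theorem det_J4 (k : Type*) [Field k] : (J4 k).det = 1 := by
  simp [J4, Matrix.det_succ_row_zero, Fin.sum_univ_succ, Fin.succAbove]

theorem isGSp_of_transpose_mul_J4_mul {k : Type*} [Field k] {g : Matrix (Fin 4) (Fin 4) k}
    {d : k} (hd : d ≠ 0) (h : gᵀ * J4 k * g = d • J4 k) : IsGSp g := by
  refine ⟨isUnit_iff_ne_zero.mpr fun hg => pow_ne_zero 4 hd ?_, d, hd, h⟩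
  simpa [hg, det_J4, Matrix.det_smul] using (congrArg Matrix.det h).symm

section Iota

variable {k K : Type*} [Field k] [Field K] {α : k} {c1 c2 : K → k}

theorem iota_transpose_mul_J4_mul (hα : α ≠ 0) (g : Matrix (Fin 2) (Fin 2) K) {d : k}
    (hd1 : c1 (g 0 0) * c1 (g 1 1) + α * c2 (g 0 0) * c2 (g 1 1)
      - (c1 (g 0 1) * c1 (g 1 0) + α * c2 (g 0 1) * c2 (g 1 0)) = d)
    (hd2 : c1 (g 0 0) * c2 (g 1 1) + c2 (g 0 0) * c1 (g 1 1)
      - (c1 (g 0 1) * c2 (g 1 0) + c2 (g 0 1) * c1 (g 1 0)) = 0) :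
    (iota α c1 c2 g)ᵀ * J4 k * iota α c1 c2 g = d • J4 k := by
  subst hd1
  ext i j
  fin_cases i <;> fin_cases j <;>
    simp only [iota, J4, Matrix.mul_apply, Fin.sum_univ_four, transpose_apply, of_apply,
      cons_val', cons_val, cons_val_zero, cons_val_one, cons_val_fin_one, Fin.isValue,
      Fin.mk_one, Fin.zero_eta, Fin.reduceFinMk, Matrix.smul_apply, smul_eq_mul] <;>
    field_simp <;>
    first
      | ring1
      | linear_combination hd2
      | linear_combination -hd2
      | linear_combination α * hd2
      | linear_combination -α * hd2

theorem iota_mul (hα : α ≠ 0)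
    (hadd : ∀ x y, c1 (x + y) = c1 x + c1 y ∧ c2 (x + y) = c2 x + c2 y)
    (hmul : ∀ x y, c1 (x * y) = c1 x * c1 y + α * c2 x * c2 y ∧
      c2 (x * y) = c1 x * c2 y + c2 x * c1 y)
    (g h : Matrix (Fin 2) (Fin 2) K) :
    iota α c1 c2 (g * h) = iota α c1 c2 g * iota α c1 c2 h := by
  ext i j
  fin_cases i <;> fin_cases j <;>
    simp only [iota, Matrix.mul_apply, Fin.sum_univ_four, Fin.sum_univ_two, of_apply,
      cons_val', cons_val, cons_val_zero, cons_val_one, cons_val_fin_one, Fin.isValue,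
      Fin.mk_one, Fin.zero_eta, Fin.reduceFinMk, hadd, hmul] <;>
    field_simp <;>
    ring

theorem iota_one (h1 : c1 1 = 1) (h2 : c2 1 = 0) (h01 : c1 0 = 0) (h02 : c2 0 = 0) :
    iota α c1 c2 1 = 1 := by
  ext i j
  fin_cases i <;> fin_cases j <;> simp [iota, h1, h2, h01, h02]

theorem iota_injective [Algebra k K] {r : K} (hα : α ≠ 0)
    (hrepr : ∀ x : K, x = algebraMap k K (c1 x) + algebraMap k K (c2 x) * r) :
    Function.Injective (iota α c1 c2) := by
  intro g h hgh
  have E : ∀ i j, iota α c1 c2 g i j = iota α c1 c2 h i j := fun i j => by rw [hgh]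
  ext i j
  fin_cases i <;> fin_cases j
  · exact eq_of_coords_eq hrepr (by simpa [iota] using E 0 0) (by simpa [iota] using E 1 0)
  · exact eq_of_coords_eq hrepr (by simpa [iota] using E 0 2) (by simpa [iota] using E 0 3)
  · exact eq_of_coords_eq hrepr (by simpa [iota] using E 2 0)
      (mul_right_cancel₀ hα (by simpa [iota] using E 3 0))
  · exact eq_of_coords_eq hrepr (by simpa [iota] using E 2 2) (by simpa [iota] using E 2 3)

end Iota

theorem statement0_general
    {k K : Type*} [Field k] [Field K] [Algebra k K]
    (α : k) (hα : α ≠ 0)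
    (r : K) (hr : r * r = algebraMap k K α)
    (c1 c2 : K → k)
    (hrepr : ∀ x : K, x = algebraMap k K (c1 x) + algebraMap k K (c2 x) * r)
    (hindep : ∀ y1 y2 : k, algebraMap k K y1 + algebraMap k K y2 * r = 0 →
      y1 = 0 ∧ y2 = 0) :
    (∀ (g : Matrix (Fin 2) (Fin 2) K) (d : k), d ≠ 0 → g.det = algebraMap k K d →
        (iota α c1 c2 g)ᵀ * J4 k * iota α c1 c2 g = d • J4 k ∧ IsGSp (iota α c1 c2 g))
    ∧ iota α c1 c2 (1 : Matrix (Fin 2) (Fin 2) K) = 1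
    ∧ (∀ g h : Matrix (Fin 2) (Fin 2) K, InH (k := k) g → InH (k := k) h →
        iota α c1 c2 (g * h) = iota α c1 c2 g * iota α c1 c2 h)
    ∧ (∀ g h : Matrix (Fin 2) (Fin 2) K, InH (k := k) g → InH (k := k) h →
        iota α c1 c2 g = iota α c1 c2 h → g = h) := by
  refine ⟨fun g d hd hdet => ?_, ?_, fun g h _ _ => ?_, fun g h _ _ hgh => ?_⟩
  · rw [Matrix.det_fin_two] at hdet
    obtain ⟨hd1, hd2⟩ := coords_mul_sub_mul hr hrepr hindep hdet
    have hsim := iota_transpose_mul_J4_mul hα g hd1 hd2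
    exact ⟨hsim, isGSp_of_transpose_mul_J4_mul hd hsim⟩
  · have h1 := coords_eq_of_eq hrepr hindep (x := (1 : K)) (y1 := 1) (y2 := 0) (by simp)
    have h0 := coords_eq_of_eq hrepr hindep (x := (0 : K)) (y1 := 0) (y2 := 0) (by simp)
    exact iota_one h1.1 h1.2 h0.1 h0.2
  · exact iota_mul hα (coords_add hrepr hindep) (coords_mul hr hrepr hindep) g h
  · exact iota_injective hα hrepr hgh

/-- For every `g ∈ GL(2,K)` with `det g ∈ kˣ`, one has
`ι(g)ᵀ · J · ι(g) = det(g) · J`; consequently `ι` restricts to an injective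
group homomorphism from `H` into `G = GSp(4,k)` with similitude factor
`λ(ι(g)) = det g`. -/
theorem statement0
    {k K : Type*} [Field k] [Field K] [Algebra k K]
    (hchar : (2 : k) ≠ 0)
    (α : k) (hα : α ≠ 0) (hns : ¬ IsSquare α)
    (r : K) (hr : r * r = algebraMap k K α)
    (c1 c2 : K → k)
    (hrepr : ∀ x : K, x = algebraMap k K (c1 x) + algebraMap k K (c2 x) * r)
    (hindep : ∀ y1 y2 : k, algebraMap k K y1 + algebraMap k K y2 * r = 0 →
      y1 = 0 ∧ y2 = 0) :
    (∀ (g : Matrix (Fin 2) (Fin 2) K) (d : k), d ≠ 0 → g.det = algebraMap k K d →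
        (iota α c1 c2 g)ᵀ * J4 k * iota α c1 c2 g = d • J4 k ∧ IsGSp (iota α c1 c2 g))
    ∧ iota α c1 c2 (1 : Matrix (Fin 2) (Fin 2) K) = 1
    ∧ (∀ g h : Matrix (Fin 2) (Fin 2) K, InH (k := k) g → InH (k := k) h →
        iota α c1 c2 (g * h) = iota α c1 c2 g * iota α c1 c2 h)
    ∧ (∀ g h : Matrix (Fin 2) (Fin 2) K, InH (k := k) g → InH (k := k) h →
        iota α c1 c2 g = iota α c1 c2 h → g = h) :=
  statement0_general α hα r hr c1 c2 hrepr hindep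
end

section
/- An element n of N commutes with every element of T̃ if and only if n ∈ S; that is, S is exactly the centralizer of T̃ in N. Since N is abelian, S is equivalently the set of elements of N that centralize both T̃ and N. -/
open Matrix

/-- The matrix `t̃_a = diag(a, ā)` for `a = a₁ + a₂√α ∈ Kˣ`, in coordinates. -/
def ttilde {k : Type*} [Field k] (α a1 a2 : k) : Matrix (Fin 4) (Fin 4) k :=
  !![a1, a2 * α, 0, 0; a2, a1, 0, 0; 0, 0, a1, -a2; 0, 0, -a2 * α, a1]

/-- The torus `T̃ = {t̃_a : a ∈ Kˣ}`. -/
def Ttilde {k K : Type*} [Field k] [Field K] (α : k) (c1 c2 : K → k) :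
    Set (Matrix (Fin 4) (Fin 4) k) :=
  {t | ∃ a : K, a ≠ 0 ∧ t = ttilde α (c1 a) (c2 a)}

/-- The unipotent radical `N` of the Siegel parabolic: block upper
unitriangular matrices with symmetric upper-right block. -/
def Nset (k : Type*) [Field k] : Set (Matrix (Fin 4) (Fin 4) k) :=
  {n | ∃ x y z : k, n = !![1, 0, x, y; 0, 1, y, z; 0, 0, 1, 0; 0, 0, 0, 1]}

/-- The subgroup `S ⊆ N` with upper-right block `diag(c, −c/α)`. -/
def Sset (k : Type*) [Field k] (α : k) : Set (Matrix (Fin 4) (Fin 4) k) :=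
  {n | ∃ c : k, n = !![1, 0, c, 0; 0, 1, 0, -c / α; 0, 0, 1, 0; 0, 0, 0, 1]}

/-- An element `n ∈ N` commutes with every element of `T̃` iff `n ∈ S`;
since `N` is abelian, `S` is equivalently the set of elements of `N`
centralizing both `T̃` and `N`. -/
theorem statement4
    {k K : Type*} [Field k] [Field K] [Algebra k K]
    (hchar : (2 : k) ≠ 0)
    (α : k) (hα : α ≠ 0) (hns : ¬ IsSquare α)
    (r : K) (hr : r * r = algebraMap k K α)
    (c1 c2 : K → k)
    (hrepr : ∀ x : K, x = algebraMap k K (c1 x) + algebraMap k K (c2 x) * r)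
    (hindep : ∀ y1 y2 : k, algebraMap k K y1 + algebraMap k K y2 * r = 0 →
      y1 = 0 ∧ y2 = 0) :
    ∀ n ∈ Nset k,
      ((∀ t ∈ Ttilde (K := K) α c1 c2, n * t = t * n) ↔ n ∈ Sset k α)
      ∧ ((∀ g : Matrix (Fin 4) (Fin 4) k,
            g ∈ Ttilde (K := K) α c1 c2 ∨ g ∈ Nset k → n * g = g * n)
          ↔ n ∈ Sset k α) := by
  intro n hn
  obtain ⟨x, y, z, rfl⟩ := hn
  -- r ≠ 0
  have hrne : r ≠ 0 := by
    intro h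
    rw [h, mul_zero] at hr
    exact hα ((map_eq_zero (algebraMap k K)).mp hr.symm)
  -- c1 r = 0 and c2 r = 1
  have hc : c1 r = 0 ∧ c2 r - 1 = 0 := by
    apply hindep
    have := hrepr r
    rw [map_sub, _root_.map_one, sub_mul, one_mul]
    linear_combination -this
  -- key iff for T̃-centralizing
  have key : (∀ t ∈ Ttilde (K := K) α c1 c2,
      (!![1, 0, x, y; 0, 1, y, z; 0, 0, 1, 0; 0, 0, 0, 1] : Matrix (Fin 4) (Fin 4) k) * t
        = t * !![1, 0, x, y; 0, 1, y, z; 0, 0, 1, 0; 0, 0, 0, 1]) ↔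
      (!![1, 0, x, y; 0, 1, y, z; 0, 0, 1, 0; 0, 0, 0, 1] : Matrix (Fin 4) (Fin 4) k)
        ∈ Sset k α := by
    constructor
    · intro h
      have ht : ttilde α (c1 r) (c2 r) ∈ Ttilde (K := K) α c1 c2 := ⟨r, hrne, rfl⟩
      have h0 := h _ ht
      rw [hc.1, sub_eq_zero.mp hc.2] at h0
      have e1 := congrFun (congrFun h0 0) 2
      have e2 := congrFun (congrFun h0 0) 3
      simp [ttilde, Matrix.mul_apply, Fin.sum_univ_four] at e1 e2
      have hy : y = 0 := by
        have h2 : (2 : k) * y * α = 0 := by linear_combination -e1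
        rcases mul_eq_zero.mp h2 with h | h
        · rcases mul_eq_zero.mp h with h | h
          · exact absurd h hchar
          · exact h
        · exact absurd h hα
      have hz : z = -x / α := by
        field_simp
        linear_combination -e2
      refine ⟨x, ?_⟩
      rw [hy, hz]
    · rintro ⟨c, hc'⟩ t ⟨a, ha, rfl⟩
      rw [hc']
      ext i j
      fin_cases i <;> fin_cases j <;>
        simp [ttilde, Matrix.mul_apply, Fin.sum_univ_four, vecHead, vecTail,
          div_eq_mul_inv] <;>
        (try field_simp) <;> ring
  refine ⟨key, ?_⟩
  constructor
  · intro h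
    exact key.mp (fun t ht => h t (Or.inl ht))
  · intro hS g hg
    rcases hg with ht | ⟨x', y', z', rfl⟩
    · exact key.mpr hS g ht
    · ext i j
      fin_cases i <;> fin_cases j <;>
        simp [Matrix.mul_apply, Fin.sum_univ_four, vecHead, vecTail, Function.comp] <;> ring
end

section
/- G = P·ι(H) ⊔ P·s₂·ι(H): every g ∈ GSp(4,k) lies in P·ι(H) or in P·s₂·ι(H), and these two sets are disjoint (second part of Lemma 2.3, the double coset decomposition G = PH ⊔ P s₂ H). -/
/-!
Identify `k⁴` with `K²` through `v ↦ (v₀ + v₁√α, v₂ + v₃/√α)`. Then `ι(h)` acts as `h`, and the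
symplectic form `⟨v, Jw⟩` is the `k`-part of the determinant `det(v, w)` on `K²`; call its
`√α`-part the twisted form. For `g ∈ G` the vectors `vᵢ = g⁻¹eᵢ` span the Lagrangian `g⁻¹L₀`.
If their twisted form vanishes, their images are `K`-collinear and some `h ∈ H` moves both into
`L₀`; otherwise `det(v₁, v₂) = t√α` with `t ∈ kˣ` and some `h ∈ H` sends them to `e₁, e₄`, which
`s₂` sends to `e₁, e₂`. The two cosets are distinguished by whether `g⁻¹L₀` is stable under
multiplication by `√α`: this commutes with `ι(H)` and preserves `L₀`, but `s₂⁻¹L₀ = span(e₁, e₄)`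
is not stable.
-/

open Matrix

/-- `L₀ = span_k(e₁,e₂) ⊆ k⁴`. -/
def L0 (k : Type*) [Field k] : Submodule k (Fin 4 → k) :=
  Submodule.span k {![1, 0, 0, 0], ![0, 1, 0, 0]}

/-- The Siegel parabolic `P = {g ∈ G : g·L₀ = L₀}`. -/
def Pset (k : Type*) [Field k] : Set (Matrix (Fin 4) (Fin 4) k) :=
  {g | IsGSp g ∧ Submodule.map g.mulVecLin (L0 k) = L0 k}

/-- The Weyl group element `s₂`. -/
def s2mat (k : Type*) [Field k] : Matrix (Fin 4) (Fin 4) k :=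
  !![1, 0, 0, 0; 0, 0, 0, 1; 0, 0, 1, 0; 0, -1, 0, 0]

namespace GSp4

section LinearAlgebra

variable {R n : Type*} [CommRing R] [Fintype n] [DecidableEq n]

theorem transpose_mul_mul_eq_smul_iff (g M : Matrix n n R) (c : R) :
    gᵀ * M * g = c • M ↔
      ∀ v w, (g *ᵥ v) ⬝ᵥ (M *ᵥ (g *ᵥ w)) = c * (v ⬝ᵥ (M *ᵥ w)) := by
  have hform : ∀ v w,
      (g *ᵥ v) ⬝ᵥ (M *ᵥ (g *ᵥ w)) = v ⬝ᵥ ((gᵀ * M * g) *ᵥ w) := by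
    intro v w
    rw [dotProduct_mulVec, ← vecMul_transpose, vecMul_vecMul, ← dotProduct_mulVec,
      mulVec_mulVec, Matrix.mul_assoc]
  simp only [hform, ← smul_eq_mul, ← dotProduct_smul, ← smul_mulVec]
  refine ⟨fun h v w => by rw [h], fun h => ?_⟩
  ext i j
  simpa [mulVec_single, single_dotProduct] using h (Pi.single i 1) (Pi.single j 1)

theorem mulVec_inv_mulVec {A : Matrix n n R} (hA : IsUnit A.det) (v : n → R) :
    A *ᵥ (A⁻¹ *ᵥ v) = v := by
  rw [mulVec_mulVec, mul_nonsing_inv _ hA, one_mulVec]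

def wedge (x y : Fin 2 → R) : R := x 0 * y 1 - x 1 * y 0

theorem wedge_mulVec (h : Matrix (Fin 2) (Fin 2) R) (x y : Fin 2 → R) :
    wedge (h *ᵥ x) (h *ᵥ y) = h.det * wedge x y := by
  simp only [wedge, mulVec, dotProduct, Fin.sum_univ_two, det_fin_two]
  ring

end LinearAlgebra

section TwoByTwo

variable {K : Type*} [Field K]

theorem exists_wedge_eq_one {U : Fin 2 → K} (hU : U ≠ 0) : ∃ W, wedge U W = 1 := by
  by_cases hU₀ : U 0 = 0
  · have hU₁ : U 1 ≠ 0 := fun hU₁ => hU (by ext i; fin_cases i <;> assumption)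
    exact ⟨![-(U 1)⁻¹, 0], by simp [wedge, hU₁]⟩
  · exact ⟨![0, (U 0)⁻¹], by simp [wedge, hU₀]⟩

theorem exists_mulVec_eq_of_wedge_ne_zero {U W : Fin 2 → K} (hUW : wedge U W ≠ 0) :
    ∃ h : Matrix (Fin 2) (Fin 2) K,
      h.det = (wedge U W)⁻¹ ∧ h *ᵥ U = ![1, 0] ∧ h *ᵥ W = ![0, 1] := by
  unfold wedge at hUW ⊢
  refine ⟨(U 0 * W 1 - U 1 * W 0)⁻¹ • !![W 1, -W 0; -U 1, U 0], ?_, ?_, ?_⟩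
  · rw [det_smul, det_fin_two_of, Fintype.card_fin]
    field_simp
  all_goals
    ext i
    fin_cases i <;>
    · simp only [mulVec, dotProduct, Fin.sum_univ_two, Matrix.smul_apply, of_apply, cons_val',
        cons_val_fin_one, cons_val_zero, cons_val_one, Fin.zero_eta, Fin.mk_one, Fin.isValue,
        smul_eq_mul]
      field_simp
      ring

end TwoByTwo

section Siegel

variable {k : Type*} [Field k]

theorem isGSp_iff {g : Matrix (Fin 4) (Fin 4) k} :
    IsGSp g ↔ IsUnit g.det ∧ ∃ lam : k, lam ≠ 0 ∧
      ∀ v w, (g *ᵥ v) ⬝ᵥ (J4 k *ᵥ (g *ᵥ w)) = lam * (v ⬝ᵥ (J4 k *ᵥ w)) := by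
  simp only [IsGSp, transpose_mul_mul_eq_smul_iff]

theorem _root_.IsGSp.mul {g₁ g₂ : Matrix (Fin 4) (Fin 4) k} (h₁ : IsGSp g₁)
    (h₂ : IsGSp g₂) : IsGSp (g₁ * g₂) := by
  obtain ⟨u₁, l₁, hl₁, e₁⟩ := isGSp_iff.mp h₁
  obtain ⟨u₂, l₂, hl₂, e₂⟩ := isGSp_iff.mp h₂
  refine isGSp_iff.mpr
    ⟨by rw [det_mul]; exact u₁.mul u₂, l₁ * l₂, mul_ne_zero hl₁ hl₂, fun v w => ?_⟩
  rw [← mulVec_mulVec, ← mulVec_mulVec, e₁, e₂, mul_assoc]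

theorem _root_.IsGSp.inv {g : Matrix (Fin 4) (Fin 4) k} (h : IsGSp g) : IsGSp g⁻¹ := by
  obtain ⟨u, l, hl, e⟩ := isGSp_iff.mp h
  refine isGSp_iff.mpr ⟨isUnit_nonsing_inv_det g u, l⁻¹, inv_ne_zero hl, fun v w => ?_⟩
  rw [eq_inv_mul_iff_mul_eq₀ hl, ← e, mulVec_inv_mulVec u, mulVec_inv_mulVec u]

theorem mem_L0_iff {v : Fin 4 → k} : v ∈ L0 k ↔ v 2 = 0 ∧ v 3 = 0 := by
  rw [L0, Submodule.mem_span_pair]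
  constructor
  · rintro ⟨s, t, rfl⟩
    simp
  · rintro ⟨h2, h3⟩
    refine ⟨v 0, v 1, ?_⟩
    ext i
    fin_cases i <;> simp [h2, h3]

theorem mulVec_mem_L0_iff {p : Matrix (Fin 4) (Fin 4) k} (hp : p ∈ Pset k) {v : Fin 4 → k} :
    p *ᵥ v ∈ L0 k ↔ v ∈ L0 k := by
  obtain ⟨⟨hu, -⟩, hmap⟩ := hp
  have hinj := mulVec_injective_of_isUnit ((isUnit_iff_isUnit_det p).mpr hu)
  conv_lhs => rw [← hmap]
  exact ⟨fun ⟨u, hu, huv⟩ => hinj huv ▸ hu, fun hv => ⟨v, hv, rfl⟩⟩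

theorem mem_Pset_of_mulVec_eq {q : Matrix (Fin 4) (Fin 4) k} (hq : IsGSp q)
    {x₁ x₂ : Fin 4 → k} (hx₁ : x₁ ∈ L0 k) (hx₂ : x₂ ∈ L0 k)
    (h₁ : q *ᵥ x₁ = ![1, 0, 0, 0]) (h₂ : q *ᵥ x₂ = ![0, 1, 0, 0]) : q ∈ Pset k := by
  refine ⟨hq, (Submodule.eq_of_le_of_finrank_le ?_ (Submodule.finrank_map_le _ _)).symm⟩
  refine Submodule.span_le.mpr (Set.insert_subset_iff.mpr ⟨?_, Set.singleton_subset_iff.mpr ?_⟩)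
  · exact h₁ ▸ Submodule.mem_map_of_mem hx₁
  · exact h₂ ▸ Submodule.mem_map_of_mem hx₂

theorem mul_inv_mem_Pset {g m : Matrix (Fin 4) (Fin 4) k} (hg : IsGSp g) (hm : IsGSp m)
    (h₁ : m *ᵥ (g⁻¹ *ᵥ ![1, 0, 0, 0]) ∈ L0 k)
    (h₂ : m *ᵥ (g⁻¹ *ᵥ ![0, 1, 0, 0]) ∈ L0 k) :
    g * m⁻¹ ∈ Pset k := by
  have hcancel : ∀ x, (g * m⁻¹) *ᵥ (m *ᵥ (g⁻¹ *ᵥ x)) = x := fun x => by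
    simp only [mulVec_mulVec, Matrix.mul_assoc, nonsing_inv_mul_cancel_left _ _ hm.1,
      mul_nonsing_inv _ hg.1, one_mulVec]
  exact mem_Pset_of_mulVec_eq (hg.mul hm.inv) h₁ h₂ (hcancel _) (hcancel _)

theorem isGSp_s2mat : IsGSp (s2mat k) := by
  refine ⟨?_, 1, one_ne_zero, ?_⟩
  · simp [s2mat, det_succ_row_zero, Fin.sum_univ_succ]
  · ext i j
    fin_cases i <;> fin_cases j <;> simp [s2mat, J4, mul_apply, Fin.sum_univ_four]

theorem s2mat_mulVec_e₁ : s2mat k *ᵥ ![1, 0, 0, 0] = ![1, 0, 0, 0] := by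
  ext i; fin_cases i <;> simp [s2mat, mulVec, dotProduct, Fin.sum_univ_four]

theorem s2mat_mulVec_e₂ : s2mat k *ᵥ ![0, 1, 0, 0] = ![0, 0, 0, -1] := by
  ext i; fin_cases i <;> simp [s2mat, mulVec, dotProduct, Fin.sum_univ_four]

theorem s2mat_mulVec_e₄ : s2mat k *ᵥ ![0, 0, 0, 1] = ![0, 1, 0, 0] := by
  ext i; fin_cases i <;> simp [s2mat, mulVec, dotProduct, Fin.sum_univ_four]

end Siegel

variable {k K : Type*} [Field k] [Field K] [Algebra k K] {α : k} {r : K} {c1 c2 : K → k}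

def toK2 (r : K) (v : Fin 4 → k) : Fin 2 → K :=
  ![algebraMap k K (v 0) + algebraMap k K (v 1) * r,
    algebraMap k K (v 2) + algebraMap k K (v 3) / r]

def twistedForm (α : k) (v w : Fin 4 → k) : k :=
  v 1 * w 2 + v 0 * w 3 / α - v 3 * w 0 / α - v 2 * w 1

theorem toK2_apply_zero (v : Fin 4 → k) :
    toK2 r v 0 = algebraMap k K (v 0) + algebraMap k K (v 1) * r := rfl

theorem toK2_apply_one (v : Fin 4 → k) :
    toK2 r v 1 = algebraMap k K (v 2) + algebraMap k K (v 3) / r := rfl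

theorem ne_zero_of_indep
    (hindep : ∀ y1 y2 : k, algebraMap k K y1 + algebraMap k K y2 * r = 0 → y1 = 0 ∧ y2 = 0) :
    r ≠ 0 := by
  rintro rfl
  simpa using hindep 0 1

theorem eq_and_eq_of_add_mul_eq
    (hindep : ∀ y1 y2 : k, algebraMap k K y1 + algebraMap k K y2 * r = 0 → y1 = 0 ∧ y2 = 0)
    {a b a' b' : k}
    (h : algebraMap k K a + algebraMap k K b * r = algebraMap k K a' + algebraMap k K b' * r) :
    a = a' ∧ b = b' := by
  have := hindep (a - a') (b - b') (by simp only [map_sub]; linear_combination h)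
  exact ⟨sub_eq_zero.mp this.1, sub_eq_zero.mp this.2⟩

theorem toK2_injective (hr0 : r ≠ 0)
    (hindep : ∀ y1 y2 : k, algebraMap k K y1 + algebraMap k K y2 * r = 0 → y1 = 0 ∧ y2 = 0) :
    Function.Injective (toK2 (k := k) r) := by
  intro v w h
  have e0 := congrFun h 0
  have e1 := congrFun h 1
  rw [toK2_apply_zero, toK2_apply_zero] at e0
  rw [toK2_apply_one, toK2_apply_one] at e1
  field_simp at e1
  obtain ⟨h0, h1⟩ := eq_and_eq_of_add_mul_eq hindep e0
  have e1' : algebraMap k K (v 3) + algebraMap k K (v 2) * r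
      = algebraMap k K (w 3) + algebraMap k K (w 2) * r := by
    linear_combination e1
  obtain ⟨h3, h2⟩ := eq_and_eq_of_add_mul_eq hindep e1'
  ext i
  fin_cases i
  exacts [h0, h1, h2, h3]

theorem toK2_zero : toK2 r (0 : Fin 4 → k) = 0 := by
  ext i; fin_cases i <;> simp [toK2]

theorem toK2_iota (hr : r * r = algebraMap k K α) (hr0 : r ≠ 0)
    (hrepr : ∀ x : K, x = algebraMap k K (c1 x) + algebraMap k K (c2 x) * r)
    (m : Matrix (Fin 2) (Fin 2) K) (v : Fin 4 → k) :
    toK2 r (iota α c1 c2 m *ᵥ v) = m *ᵥ toK2 r v := by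
  have hα : algebraMap k K α ≠ 0 := hr ▸ mul_ne_zero hr0 hr0
  ext i
  fin_cases i <;>
  · simp only [toK2, iota, mulVec, dotProduct, Fin.sum_univ_four, Fin.sum_univ_two, of_apply,
      cons_val', cons_val_fin_one, cons_val_zero, cons_val_one, cons_val, Fin.zero_eta,
      Fin.mk_one, Fin.isValue, map_add, map_mul, map_div₀]
    conv_rhs => rw [hrepr (m _ 0), hrepr (m _ 1)]
    rw [← hr]
    field_simp
    ring

theorem wedge_toK2 (hr : r * r = algebraMap k K α) (hr0 : r ≠ 0) (v w : Fin 4 → k) :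
    wedge (toK2 r v) (toK2 r w)
      = algebraMap k K (v ⬝ᵥ (J4 k *ᵥ w)) + algebraMap k K (twistedForm α v w) * r := by
  have hα : algebraMap k K α ≠ 0 := hr ▸ mul_ne_zero hr0 hr0
  simp only [wedge, toK2, twistedForm, J4, mulVec, dotProduct, Fin.sum_univ_four, of_apply,
    cons_val', cons_val_fin_one, cons_val_zero, cons_val_one, cons_val, Fin.isValue, map_add,
    map_sub, map_mul, map_neg, map_div₀, map_zero, map_one]
  rw [← hr]
  field_simp
  ring

theorem mem_L0_iff_toK2 (hr0 : r ≠ 0)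
    (hindep : ∀ y1 y2 : k, algebraMap k K y1 + algebraMap k K y2 * r = 0 → y1 = 0 ∧ y2 = 0)
    {v : Fin 4 → k} : v ∈ L0 k ↔ toK2 r v 1 = 0 := by
  rw [mem_L0_iff]
  refine ⟨fun ⟨h2, h3⟩ => by simp [toK2, h2, h3], fun h => ?_⟩
  rw [toK2_apply_one] at h
  field_simp at h
  have := hindep (v 3) (v 2) (by linear_combination h)
  exact ⟨this.2, this.1⟩

theorem isUnit_det_iota (hr0 : r ≠ 0) (hr : r * r = algebraMap k K α)
    (hrepr : ∀ x : K, x = algebraMap k K (c1 x) + algebraMap k K (c2 x) * r)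
    (hindep : ∀ y1 y2 : k, algebraMap k K y1 + algebraMap k K y2 * r = 0 → y1 = 0 ∧ y2 = 0)
    {h : Matrix (Fin 2) (Fin 2) K} (hdet : h.det ≠ 0) :
    IsUnit (iota α c1 c2 h).det := by
  rw [isUnit_iff_ne_zero, Ne, ← exists_mulVec_eq_zero_iff]
  rintro ⟨v, hv, hιv⟩
  have hhv : h *ᵥ toK2 r v = 0 := by rw [← toK2_iota hr hr0 hrepr, hιv, toK2_zero]
  have hv' : toK2 r v ≠ 0 := fun h0 => hv (toK2_injective hr0 hindep (h0.trans toK2_zero.symm))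
  exact hdet (exists_mulVec_eq_zero_iff.mp ⟨_, hv', hhv⟩)

theorem isGSp_iota (hr : r * r = algebraMap k K α)
    (hrepr : ∀ x : K, x = algebraMap k K (c1 x) + algebraMap k K (c2 x) * r)
    (hindep : ∀ y1 y2 : k, algebraMap k K y1 + algebraMap k K y2 * r = 0 → y1 = 0 ∧ y2 = 0)
    {h : Matrix (Fin 2) (Fin 2) K} (hh : InH (k := k) h) :
    IsGSp (iota α c1 c2 h) := by
  obtain ⟨d, hd, hdet⟩ := hh
  have hr0 := ne_zero_of_indep hindep
  refine isGSp_iff.mpr ⟨isUnit_det_iota hr0 hr hrepr hindep (by simpa [hdet] using hd), d, hd,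
    fun v w => ?_⟩
  have e := wedge_toK2 hr hr0 (iota α c1 c2 h *ᵥ v) (iota α c1 c2 h *ᵥ w)
  rw [toK2_iota hr hr0 hrepr, toK2_iota hr hr0 hrepr, wedge_mulVec, wedge_toK2 hr hr0, hdet]
    at e
  refine (eq_and_eq_of_add_mul_eq hindep (b' := d * twistedForm α v w) (e.symm.trans ?_)).1
  simp only [map_mul]
  ring

/-- Multiplication by `√α` on `K`, transported to `k⁴` (it equals `ι(√α · 1)`). -/
def mulSqrt (α : k) : Matrix (Fin 4) (Fin 4) k :=
  !![0, α, 0, 0; 1, 0, 0, 0; 0, 0, 0, 1; 0, 0, α, 0]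

theorem toK2_mulSqrt (hr : r * r = algebraMap k K α) (hr0 : r ≠ 0) (v : Fin 4 → k) :
    toK2 r (mulSqrt α *ᵥ v) = r • toK2 r v := by
  ext i
  fin_cases i <;>
  · simp only [toK2, mulSqrt, mulVec, dotProduct, Fin.sum_univ_four, of_apply, cons_val',
      cons_val_fin_one, cons_val_zero, cons_val_one, cons_val, Fin.zero_eta, Fin.mk_one,
      Fin.isValue, Pi.smul_apply, smul_eq_mul, zero_mul, one_mul, zero_add, add_zero, map_mul,
      ← hr]
    field_simp
    ring

theorem iota_mulVec_mulSqrt (hr : r * r = algebraMap k K α)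
    (hrepr : ∀ x : K, x = algebraMap k K (c1 x) + algebraMap k K (c2 x) * r)
    (hindep : ∀ y1 y2 : k, algebraMap k K y1 + algebraMap k K y2 * r = 0 → y1 = 0 ∧ y2 = 0)
    (h : Matrix (Fin 2) (Fin 2) K) (v : Fin 4 → k) :
    iota α c1 c2 h *ᵥ (mulSqrt α *ᵥ v) = mulSqrt α *ᵥ (iota α c1 c2 h *ᵥ v) := by
  have hr0 := ne_zero_of_indep hindep
  apply toK2_injective hr0 hindep
  rw [toK2_iota hr hr0 hrepr, toK2_mulSqrt hr hr0, toK2_mulSqrt hr hr0, toK2_iota hr hr0 hrepr,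
    mulVec_smul]

theorem mulSqrt_mulVec_mem_L0 {v : Fin 4 → k} (hv : v ∈ L0 k) : mulSqrt α *ᵥ v ∈ L0 k := by
  rw [mem_L0_iff] at hv ⊢
  simp [mulSqrt, mulVec, dotProduct, Fin.sum_univ_four, hv.1, hv.2]

theorem mulSqrt_mulVec_e₁ : mulSqrt α *ᵥ ![1, 0, 0, 0] = ![0, 1, 0, 0] := by
  ext i; fin_cases i <;> simp [mulSqrt, mulVec, dotProduct, Fin.sum_univ_four]

theorem exists_iota_mulVec_mem_L0 (hr : r * r = algebraMap k K α)
    (hrepr : ∀ x : K, x = algebraMap k K (c1 x) + algebraMap k K (c2 x) * r)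
    (hindep : ∀ y1 y2 : k, algebraMap k K y1 + algebraMap k K y2 * r = 0 → y1 = 0 ∧ y2 = 0)
    {v₁ v₂ : Fin 4 → k} (hv₁ : v₁ ≠ 0) (hw : wedge (toK2 r v₁) (toK2 r v₂) = 0) :
    ∃ h : Matrix (Fin 2) (Fin 2) K, InH (k := k) h ∧
      iota α c1 c2 h *ᵥ v₁ ∈ L0 k ∧ iota α c1 c2 h *ᵥ v₂ ∈ L0 k := by
  have hr0 := ne_zero_of_indep hindep
  have hU : toK2 r v₁ ≠ 0 := fun h0 =>
    hv₁ (toK2_injective hr0 hindep (h0.trans toK2_zero.symm))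
  obtain ⟨W, hW⟩ := exists_wedge_eq_one hU
  obtain ⟨h, hdet, hhU, -⟩ := exists_mulVec_eq_of_wedge_ne_zero (hW.symm ▸ one_ne_zero)
  rw [hW, inv_one] at hdet
  have hw' := wedge_mulVec h (toK2 r v₁) (toK2 r v₂)
  rw [hhU, hw, mul_zero] at hw'
  refine ⟨h, ⟨1, one_ne_zero, by rw [hdet, map_one]⟩, ?_, ?_⟩ <;>
    rw [mem_L0_iff_toK2 hr0 hindep, toK2_iota hr hr0 hrepr]
  · simp [hhU]
  · simpa [wedge] using hw'

theorem exists_iota_mulVec_eq (hr : r * r = algebraMap k K α)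
    (hrepr : ∀ x : K, x = algebraMap k K (c1 x) + algebraMap k K (c2 x) * r)
    (hindep : ∀ y1 y2 : k, algebraMap k K y1 + algebraMap k K y2 * r = 0 → y1 = 0 ∧ y2 = 0)
    {v₁ v₂ : Fin 4 → k} {t : k} (ht : t ≠ 0)
    (hw : wedge (toK2 r v₁) (toK2 r v₂) = algebraMap k K t * r) :
    ∃ h : Matrix (Fin 2) (Fin 2) K, InH (k := k) h ∧
      iota α c1 c2 h *ᵥ v₁ = ![1, 0, 0, 0] ∧ iota α c1 c2 h *ᵥ v₂ = ![0, 0, 0, 1] := by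
  have hr0 := ne_zero_of_indep hindep
  have hα : α ≠ 0 := fun h0 => hr0 (mul_self_eq_zero.mp (by rw [hr, h0, map_zero]))
  have hw' : wedge (toK2 r v₁) (r • toK2 r v₂) = algebraMap k K (t * α) := by
    rw [map_mul, ← hr, ← mul_assoc, ← hw]
    simp only [wedge, Pi.smul_apply, smul_eq_mul]
    ring
  have htα : t * α ≠ 0 := mul_ne_zero ht hα
  obtain ⟨h, hdet, hhU, hhW⟩ :=
    exists_mulVec_eq_of_wedge_ne_zero (hw' ▸ (map_ne_zero _).mpr htα)
  refine ⟨h, ⟨(t * α)⁻¹, inv_ne_zero htα, by rw [hdet, hw', map_inv₀]⟩, ?_, ?_⟩ <;>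
    apply toK2_injective hr0 hindep <;> rw [toK2_iota hr hr0 hrepr]
  · rw [hhU]
    ext i; fin_cases i <;> simp [toK2]
  · rw [mulVec_smul] at hhW
    have := congrArg (r⁻¹ • ·) hhW
    simp only [smul_smul, inv_mul_cancel₀ hr0, one_smul] at this
    rw [this]
    ext i; fin_cases i <;> simp [toK2]

theorem mem_Pset_mul_iota_or (hr : r * r = algebraMap k K α)
    (hrepr : ∀ x : K, x = algebraMap k K (c1 x) + algebraMap k K (c2 x) * r)
    (hindep : ∀ y1 y2 : k, algebraMap k K y1 + algebraMap k K y2 * r = 0 → y1 = 0 ∧ y2 = 0)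
    {g : Matrix (Fin 4) (Fin 4) k} (hg : IsGSp g) :
    (∃ p ∈ Pset k, ∃ h : Matrix (Fin 2) (Fin 2) K,
        InH (k := k) h ∧ g = p * iota α c1 c2 h) ∨
      ∃ p ∈ Pset k, ∃ h : Matrix (Fin 2) (Fin 2) K,
        InH (k := k) h ∧ g = p * s2mat k * iota α c1 c2 h := by
  have hr0 := ne_zero_of_indep hindep
  obtain ⟨hgu, lam, hlam, hform⟩ := isGSp_iff.mp hg
  set v₁ := g⁻¹ *ᵥ ![1, 0, 0, 0]
  set v₂ := g⁻¹ *ᵥ ![0, 1, 0, 0]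
  have hgv₁ : g *ᵥ v₁ = ![1, 0, 0, 0] := mulVec_inv_mulVec hgu _
  have hLag : v₁ ⬝ᵥ (J4 k *ᵥ v₂) = 0 := by
    have := hform v₁ v₂
    rw [hgv₁, mulVec_inv_mulVec hgu] at this
    simpa [J4, mulVec, dotProduct, Fin.sum_univ_four, hlam] using this.symm
  have hw := wedge_toK2 hr hr0 v₁ v₂
  rw [hLag, map_zero, zero_add] at hw
  by_cases ht : twistedForm α v₁ v₂ = 0
  · left
    have hv₁0 : v₁ ≠ 0 := fun h0 => by simpa [h0] using congrFun hgv₁ 0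
    obtain ⟨h, hh, h₁, h₂⟩ :=
      exists_iota_mulVec_mem_L0 (c1 := c1) (c2 := c2) hr hrepr hindep hv₁0
        (by rw [hw, ht, map_zero, zero_mul])
    have hι := isGSp_iota hr hrepr hindep hh
    exact ⟨_, mul_inv_mem_Pset hg hι h₁ h₂, h, hh,
      (nonsing_inv_mul_cancel_right _ _ hι.1).symm⟩
  · right
    obtain ⟨h, hh, h₁, h₂⟩ :=
      exists_iota_mulVec_eq (c1 := c1) (c2 := c2) hr hrepr hindep ht hw
    have hm := isGSp_s2mat.mul (isGSp_iota hr hrepr hindep hh)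
    refine ⟨_, mul_inv_mem_Pset hg hm ?_ ?_, h, hh, ?_⟩
    · rw [← mulVec_mulVec, h₁, s2mat_mulVec_e₁, mem_L0_iff]
      simp
    · rw [← mulVec_mulVec, h₂, s2mat_mulVec_e₄, mem_L0_iff]
      simp
    · rw [Matrix.mul_assoc, nonsing_inv_mul_cancel_right _ _ hm.1]

theorem mul_iota_mulVec_mulSqrt_mem_L0 (hr : r * r = algebraMap k K α)
    (hrepr : ∀ x : K, x = algebraMap k K (c1 x) + algebraMap k K (c2 x) * r)
    (hindep : ∀ y1 y2 : k, algebraMap k K y1 + algebraMap k K y2 * r = 0 → y1 = 0 ∧ y2 = 0)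
    {p : Matrix (Fin 4) (Fin 4) k} (hp : p ∈ Pset k) (h : Matrix (Fin 2) (Fin 2) K)
    {v : Fin 4 → k} (hv : (p * iota α c1 c2 h) *ᵥ v ∈ L0 k) :
    (p * iota α c1 c2 h) *ᵥ (mulSqrt α *ᵥ v) ∈ L0 k := by
  rw [← mulVec_mulVec, mulVec_mem_L0_iff hp] at hv ⊢
  rw [iota_mulVec_mulSqrt hr hrepr hindep]
  exact mulSqrt_mulVec_mem_L0 hv

theorem exists_mul_s2mat_iota_mulVec_mulSqrt_not_mem_L0 (hr : r * r = algebraMap k K α)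
    (hrepr : ∀ x : K, x = algebraMap k K (c1 x) + algebraMap k K (c2 x) * r)
    (hindep : ∀ y1 y2 : k, algebraMap k K y1 + algebraMap k K y2 * r = 0 → y1 = 0 ∧ y2 = 0)
    {q : Matrix (Fin 4) (Fin 4) k} (hq : q ∈ Pset k) {h : Matrix (Fin 2) (Fin 2) K}
    (hh : InH (k := k) h) :
    ∃ v, (q * s2mat k * iota α c1 c2 h) *ᵥ v ∈ L0 k ∧
      (q * s2mat k * iota α c1 c2 h) *ᵥ (mulSqrt α *ᵥ v) ∉ L0 k := by
  have hι := (isGSp_iota (c1 := c1) (c2 := c2) hr hrepr hindep hh).1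
  refine ⟨(iota α c1 c2 h)⁻¹ *ᵥ ![1, 0, 0, 0], ?_, ?_⟩ <;>
    simp only [← mulVec_mulVec, mulVec_mem_L0_iff hq]
  · rw [mulVec_inv_mulVec hι, s2mat_mulVec_e₁, mem_L0_iff]
    simp
  · rw [iota_mulVec_mulSqrt hr hrepr hindep, mulVec_inv_mulVec hι, mulSqrt_mulVec_e₁,
      s2mat_mulVec_e₂, mem_L0_iff]
    simp

end GSp4

theorem statement7_general
    {k K : Type*} [Field k] [Field K] [Algebra k K]
    (α : k)
    (r : K) (hr : r * r = algebraMap k K α)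
    (c1 c2 : K → k)
    (hrepr : ∀ x : K, x = algebraMap k K (c1 x) + algebraMap k K (c2 x) * r)
    (hindep : ∀ y1 y2 : k, algebraMap k K y1 + algebraMap k K y2 * r = 0 →
      y1 = 0 ∧ y2 = 0) :
    (∀ g : Matrix (Fin 4) (Fin 4) k, IsGSp g →
      (∃ p ∈ Pset k, ∃ h : Matrix (Fin 2) (Fin 2) K,
          InH (k := k) h ∧ g = p * iota α c1 c2 h)
      ∨ (∃ p ∈ Pset k, ∃ h : Matrix (Fin 2) (Fin 2) K,
          InH (k := k) h ∧ g = p * s2mat k * iota α c1 c2 h))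
    ∧ ∀ g : Matrix (Fin 4) (Fin 4) k,
        ¬ ((∃ p ∈ Pset k, ∃ h : Matrix (Fin 2) (Fin 2) K,
              InH (k := k) h ∧ g = p * iota α c1 c2 h)
          ∧ (∃ p ∈ Pset k, ∃ h : Matrix (Fin 2) (Fin 2) K,
              InH (k := k) h ∧ g = p * s2mat k * iota α c1 c2 h)) := by
  refine ⟨fun g hg => GSp4.mem_Pset_mul_iota_or hr hrepr hindep hg, ?_⟩
  rintro g ⟨⟨p, hp, h₁, -, rfl⟩, ⟨q, hq, h₂, hh₂, hg⟩⟩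
  obtain ⟨v, hv, hv'⟩ :=
    GSp4.exists_mul_s2mat_iota_mulVec_mulSqrt_not_mem_L0 hr hrepr hindep hq hh₂
  rw [← hg] at hv hv'
  exact hv' (GSp4.mul_iota_mulVec_mulSqrt_mem_L0 hr hrepr hindep hp h₁ hv)

/-- `G = P·ι(H) ⊔ P·s₂·ι(H)`: every `g ∈ GSp(4,k)` lies in `P·ι(H)` or in
`P·s₂·ι(H)`, and these two sets are disjoint. -/
theorem statement7
    {k K : Type*} [Field k] [Field K] [Algebra k K]
    (hchar : (2 : k) ≠ 0)
    (α : k) (hα : α ≠ 0) (hns : ¬ IsSquare α)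
    (r : K) (hr : r * r = algebraMap k K α)
    (c1 c2 : K → k)
    (hrepr : ∀ x : K, x = algebraMap k K (c1 x) + algebraMap k K (c2 x) * r)
    (hindep : ∀ y1 y2 : k, algebraMap k K y1 + algebraMap k K y2 * r = 0 →
      y1 = 0 ∧ y2 = 0) :
    (∀ g : Matrix (Fin 4) (Fin 4) k, IsGSp g →
      (∃ p ∈ Pset k, ∃ h : Matrix (Fin 2) (Fin 2) K,
          InH (k := k) h ∧ g = p * iota α c1 c2 h)
      ∨ (∃ p ∈ Pset k, ∃ h : Matrix (Fin 2) (Fin 2) K,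
          InH (k := k) h ∧ g = p * s2mat k * iota α c1 c2 h))
    ∧ ∀ g : Matrix (Fin 4) (Fin 4) k,
        ¬ ((∃ p ∈ Pset k, ∃ h : Matrix (Fin 2) (Fin 2) K,
              InH (k := k) h ∧ g = p * iota α c1 c2 h)
          ∧ (∃ p ∈ Pset k, ∃ h : Matrix (Fin 2) (Fin 2) K,
              InH (k := k) h ∧ g = p * s2mat k * iota α c1 c2 h)) :=
  statement7_general α r hr c1 c2 hrepr hindep
end

section
/- Q ∩ ι(H) = T·Z_G·Ñ: an element ι(h) with h ∈ H lies in the Klingen parabolic Q if and only if h = ((a,b),(0,d)) with a, d ∈ kˣ and b ∈ K, and the set of such elements equals {x_λ·z·ñ : x_λ ∈ T, z ∈ Z_G, ñ ∈ Ñ} (first part of Lemma 2.4). -/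
open Matrix

/-- The Klingen parabolic `Q = {g ∈ G : g·(k·e₁) = k·e₁}`. -/
def Qset (k : Type*) [Field k] : Set (Matrix (Fin 4) (Fin 4) k) :=
  {g | IsGSp g ∧ ∃ mu : k, mu ≠ 0 ∧
    g.mulVec ![1, 0, 0, 0] = mu • (![1, 0, 0, 0] : Fin 4 → k)}

/-- The torus `T = {x_λ = diag(λ,λ,1,1) : λ ∈ kˣ}`. -/
def Tset (k : Type*) [Field k] : Set (Matrix (Fin 4) (Fin 4) k) :=
  {t | ∃ lam : k, lam ≠ 0 ∧
    t = !![lam, 0, 0, 0; 0, lam, 0, 0; 0, 0, 1, 0; 0, 0, 0, 1]}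

/-- The center `Z_G = {λ·E₄ : λ ∈ kˣ}`. -/
def ZG (k : Type*) [Field k] : Set (Matrix (Fin 4) (Fin 4) k) :=
  {z | ∃ mu : k, mu ≠ 0 ∧ z = mu • (1 : Matrix (Fin 4) (Fin 4) k)}

/-- The subgroup `Ñ ⊆ N` with upper-right block `((b₁,b₂),(b₂,b₁/α))`. -/
def Ntset (k : Type*) [Field k] (α : k) : Set (Matrix (Fin 4) (Fin 4) k) :=
  {n | ∃ b1 b2 : k, n = !![1, 0, b1, b2; 0, 1, b2, b1 / α; 0, 0, 1, 0; 0, 0, 0, 1]}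


section Helpers

variable {k : Type*} [Field k]

set_option maxHeartbeats 1000000 in
lemma qmain (α : k) (hα : α ≠ 0) (a d b1 b2 : k) (ha : a ≠ 0) (hd : d ≠ 0) :
    (!![a, 0, b1, b2; 0, a, b2, b1/α; 0, 0, d, 0; 0, 0, 0, d] :
      Matrix (Fin 4) (Fin 4) k) ∈ Qset k := by
  refine ⟨⟨?_, ⟨a*d, mul_ne_zero ha hd, ?_⟩⟩, ⟨a, ha, ?_⟩⟩
  · rw [isUnit_iff_ne_zero]
    have hdet : (!![a, 0, b1, b2; 0, a, b2, b1/α; 0, 0, d, 0; 0, 0, 0, d] :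
        Matrix (Fin 4) (Fin 4) k).det = (a*d)^2 := by
      simp [Matrix.det_succ_row_zero, Fin.sum_univ_succ]
      ring
    rw [hdet]
    exact pow_ne_zero 2 (mul_ne_zero ha hd)
  · have htr : (!![a, 0, b1, b2; 0, a, b2, b1/α; 0, 0, d, 0; 0, 0, 0, d] :
        Matrix (Fin 4) (Fin 4) k)ᵀ
        = !![a, 0, 0, 0; 0, a, 0, 0; b1, b2, d, 0; b2, b1/α, 0, d] := by
      ext i j
      fin_cases i <;> fin_cases j <;> rfl
    rw [htr]
    ext i j
    fin_cases i <;> fin_cases j <;>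
      simp [J4, Matrix.mul_apply, Fin.sum_univ_four, Matrix.vecHead, Matrix.vecTail] <;> ring
  · funext i
    fin_cases i <;> simp [Matrix.mulVec, dotProduct, Fin.sum_univ_four]

set_option maxHeartbeats 1000000 in
lemma prodTZN (α lam mu b1 b2 : k) :
    (!![lam,0,0,0;0,lam,0,0;0,0,1,0;0,0,0,1] : Matrix (Fin 4) (Fin 4) k) *
      (mu • (1 : Matrix (Fin 4) (Fin 4) k)) *
      !![1,0,b1,b2;0,1,b2,b1/α;0,0,1,0;0,0,0,1]
    = !![lam*mu, 0, lam*mu*b1, lam*mu*b2;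
         0, lam*mu, lam*mu*b2, lam*mu*b1/α;
         0, 0, mu, 0; 0, 0, 0, mu] := by
  rw [Matrix.mul_smul, Matrix.mul_one, Matrix.smul_mul]
  ext i j
  fin_cases i <;> fin_cases j <;>
    simp [Matrix.mul_apply, Matrix.one_apply, Fin.sum_univ_four, Matrix.vecHead, Matrix.vecTail] <;> ring

end Helpers

/-- `Q ∩ ι(H) = T·Z_G·Ñ`: for `h ∈ H`, `ι(h) ∈ Q` iff `h` is upper triangular
with diagonal in `kˣ`, and the set of such `ι(h)` equals
`{x_λ·z·ñ : x_λ ∈ T, z ∈ Z_G, ñ ∈ Ñ}`. -/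

theorem statement10
    {k K : Type*} [Field k] [Field K] [Algebra k K]
    (hchar : (2 : k) ≠ 0)
    (α : k) (hα : α ≠ 0) (hns : ¬ IsSquare α)
    (r : K) (hr : r * r = algebraMap k K α)
    (c1 c2 : K → k)
    (hrepr : ∀ x : K, x = algebraMap k K (c1 x) + algebraMap k K (c2 x) * r)
    (hindep : ∀ y1 y2 : k, algebraMap k K y1 + algebraMap k K y2 * r = 0 →
      y1 = 0 ∧ y2 = 0) :
    (∀ h : Matrix (Fin 2) (Fin 2) K, InH (k := k) h →
      (iota α c1 c2 h ∈ Qset k ↔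
        h 1 0 = 0 ∧ (∃ a : k, a ≠ 0 ∧ h 0 0 = algebraMap k K a)
          ∧ (∃ d : k, d ≠ 0 ∧ h 1 1 = algebraMap k K d)))
    ∧ {g : Matrix (Fin 4) (Fin 4) k |
          ∃ h : Matrix (Fin 2) (Fin 2) K,
            InH (k := k) h ∧ g = iota α c1 c2 h ∧ g ∈ Qset k}
      = {g : Matrix (Fin 4) (Fin 4) k |
          ∃ x ∈ Tset k, ∃ z ∈ ZG k, ∃ n ∈ Ntset k α, g = x * z * n} := by
  have inj : Function.Injective (algebraMap k K) := (algebraMap k K).injective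
  have hc : ∀ y1 y2 : k, c1 (algebraMap k K y1 + algebraMap k K y2 * r) = y1 ∧
      c2 (algebraMap k K y1 + algebraMap k K y2 * r) = y2 := by
    intro y1 y2
    have h0 := hrepr (algebraMap k K y1 + algebraMap k K y2 * r)
    have h1 := hindep (c1 (algebraMap k K y1 + algebraMap k K y2 * r) - y1)
      (c2 (algebraMap k K y1 + algebraMap k K y2 * r) - y2)
      (by rw [map_sub, map_sub]; linear_combination -h0)
    exact ⟨sub_eq_zero.mp h1.1, sub_eq_zero.mp h1.2⟩
  have halg : ∀ y : k, c1 (algebraMap k K y) = y ∧ c2 (algebraMap k K y) = 0 := by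
    intro y
    have := hc y 0
    simpa using this
  have iota_eq : ∀ (h : Matrix (Fin 2) (Fin 2) K) (a d b1 b2 : k),
      h 0 0 = algebraMap k K a → h 1 0 = 0 → h 1 1 = algebraMap k K d →
      h 0 1 = algebraMap k K b1 + algebraMap k K b2 * r →
      iota α c1 c2 h = !![a, 0, b1, b2; 0, a, b2, b1/α; 0, 0, d, 0; 0, 0, 0, d] := by
    intro h a d b1 b2 h00 h10 h11 h01
    have e0 : h 1 0 = algebraMap k K 0 := by simpa using h10
    simp only [iota]
    rw [h00, h11, h01, e0, (halg a).1, (halg a).2, (halg d).1, (halg d).2,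
      (halg 0).1, (halg 0).2, (hc b1 b2).1, (hc b1 b2).2]
    ext i j
    fin_cases i <;> fin_cases j <;> simp
  have part1 : ∀ h : Matrix (Fin 2) (Fin 2) K, InH (k := k) h →
      (iota α c1 c2 h ∈ Qset k ↔
        h 1 0 = 0 ∧ (∃ a : k, a ≠ 0 ∧ h 0 0 = algebraMap k K a)
          ∧ (∃ d : k, d ≠ 0 ∧ h 1 1 = algebraMap k K d)) := by
    intro h hH
    constructor
    · rintro ⟨-, mu, hmu, hmv⟩
      have e0 := congrFun hmv 0
      have e1 := congrFun hmv 1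
      have e2 := congrFun hmv 2
      have e3 := congrFun hmv 3
      simp [iota, Matrix.mulVec, dotProduct, Fin.sum_univ_four, hα]
        at e0 e1 e2 e3
      have h10 : h 1 0 = 0 := by rw [hrepr (h 1 0), e2, e3]; simp
      have h00 : h 0 0 = algebraMap k K mu := by rw [hrepr (h 0 0), e0, e1]; simp
      obtain ⟨dk, hdk, hdet⟩ := hH
      have hmu' : algebraMap k K mu ≠ 0 := fun e => hmu (inj (by simpa using e))
      have hdet2 : algebraMap k K mu * h 1 1 = algebraMap k K dk := by
        rw [← hdet, Matrix.det_fin_two, h10, h00]; ring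
      have h11 : h 1 1 = algebraMap k K (dk / mu) := by
        rw [map_div₀, eq_div_iff hmu']
        linear_combination hdet2
      exact ⟨h10, ⟨mu, hmu, h00⟩, ⟨dk/mu, div_ne_zero hdk hmu, h11⟩⟩
    · rintro ⟨h10, ⟨a, ha, h00⟩, ⟨d, hd, h11⟩⟩
      rw [iota_eq h a d (c1 (h 0 1)) (c2 (h 0 1)) h00 h10 h11 (hrepr (h 0 1))]
      exact qmain α hα a d _ _ ha hd
  refine ⟨part1, ?_⟩
  ext g
  simp only [Set.mem_setOf_eq]
  constructor
  · rintro ⟨h, hH, rfl, hQ⟩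
    obtain ⟨h10, ⟨a, ha, h00⟩, ⟨d, hd, h11⟩⟩ := (part1 h hH).mp hQ
    refine ⟨!![a/d,0,0,0;0,a/d,0,0;0,0,1,0;0,0,0,1], ⟨a/d, div_ne_zero ha hd, rfl⟩,
      d • 1, ⟨d, hd, rfl⟩,
      !![1,0,c1 (h 0 1)/a, c2 (h 0 1)/a; 0,1,c2 (h 0 1)/a,(c1 (h 0 1)/a)/α;
         0,0,1,0;0,0,0,1],
      ⟨c1 (h 0 1)/a, c2 (h 0 1)/a, rfl⟩, ?_⟩
    rw [prodTZN, iota_eq h a d (c1 (h 0 1)) (c2 (h 0 1)) h00 h10 h11 (hrepr (h 0 1))]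
    ext i j
    fin_cases i <;> fin_cases j <;> field_simp
  · rintro ⟨x, ⟨lam, hlam, rfl⟩, z, ⟨mu, hmu, rfl⟩, n, ⟨b1, b2, rfl⟩, rfl⟩
    have hiota := iota_eq
      (!![algebraMap k K (lam*mu),
          algebraMap k K (lam*mu*b1) + algebraMap k K (lam*mu*b2) * r;
          0, algebraMap k K mu])
      (lam*mu) mu (lam*mu*b1) (lam*mu*b2) (by simp) (by simp) (by simp) (by simp)
    refine ⟨!![algebraMap k K (lam*mu),
          algebraMap k K (lam*mu*b1) + algebraMap k K (lam*mu*b2) * r;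
          0, algebraMap k K mu],
        ⟨lam*mu*mu, mul_ne_zero (mul_ne_zero hlam hmu) hmu, ?_⟩, ?_, ?_⟩
    · rw [Matrix.det_fin_two_of]
      simp [← _root_.map_mul, mul_assoc]
    · rw [prodTZN, hiota]
    · rw [prodTZN]
      exact qmain α hα (lam*mu) mu _ _ (mul_ne_zero hlam hmu) hmu
end

section
/- P ∩ s₂·ι(H)·s₂⁻¹ equals the set of 4×4 matrices with rows (a,b,0,0), (c,d,0,0), (0,0,d,−c), (0,0,−b,a) with a,b,c,d ∈ k and ad − bc ∈ kˣ; moreover the map ((a,b),(c,d)) ↦ (this 4×4 matrix) is an injective group homomorphism from GL(2,k) into GSp(4,k), so P ∩ s₂ H s₂⁻¹ ≅ GL(2,k) (third part of Lemma 2.4). -/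
open Matrix

/-- The embedding of `GL(2,k)` as the block matrices
`((a,b,0,0),(c,d,0,0),(0,0,d,−c),(0,0,−b,a))`. -/
def embGL2 {k : Type*} [Field k] (m : Matrix (Fin 2) (Fin 2) k) :
    Matrix (Fin 4) (Fin 4) k :=
  !![m 0 0, m 0 1, 0, 0;
     m 1 0, m 1 1, 0, 0;
     0, 0, m 1 1, -(m 1 0);
     0, 0, -(m 0 1), m 0 0]

/-- Transpose of `s₂`, which is also its inverse. -/
def s2T (k : Type*) [Field k] : Matrix (Fin 4) (Fin 4) k :=
  !![1, 0, 0, 0; 0, 0, 0, -1; 0, 0, 1, 0; 0, 1, 0, 0]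

lemma s2_mul_s2T (k : Type*) [Field k] : s2mat k * s2T k = 1 := by
  ext i j
  fin_cases i <;> fin_cases j <;>
    simp [s2mat, s2T, Matrix.mul_apply, Fin.sum_univ_four, Matrix.one_apply,
      Matrix.vecHead, Matrix.vecTail]

lemma s2_inv (k : Type*) [Field k] : (s2mat k)⁻¹ = s2T k :=
  Matrix.inv_eq_right_inv (s2_mul_s2T k)

lemma memL0_iff {k : Type*} [Field k] (v : Fin 4 → k) :
    v ∈ L0 k ↔ v 2 = 0 ∧ v 3 = 0 := by
  rw [L0, Submodule.mem_span_pair]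
  constructor
  · rintro ⟨a, b, rfl⟩
    constructor <;> simp
  · rintro ⟨h2, h3⟩
    refine ⟨v 0, v 1, ?_⟩
    funext i
    fin_cases i <;> simp [h2, h3]

lemma embGL2_one {k : Type*} [Field k] :
    embGL2 (1 : Matrix (Fin 2) (Fin 2) k) = 1 := by
  ext i j
  fin_cases i <;> fin_cases j <;>
    simp [embGL2, Matrix.one_apply, Matrix.vecHead, Matrix.vecTail]

lemma embGL2_mul {k : Type*} [Field k] (m m' : Matrix (Fin 2) (Fin 2) k) :
    embGL2 (m * m') = embGL2 m * embGL2 m' := by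
  ext i j
  fin_cases i <;> fin_cases j <;>
    simp [embGL2, Matrix.mul_apply, Fin.sum_univ_four, Fin.sum_univ_two,
      Matrix.vecHead, Matrix.vecTail] <;> ring

lemma embGL2_isGSp {k : Type*} [Field k] (m : Matrix (Fin 2) (Fin 2) k)
    (hm : IsUnit m.det) : IsGSp (embGL2 m) := by
  refine ⟨Matrix.isUnit_det_of_right_inverse (B := embGL2 m⁻¹) ?_, m.det,
    hm.ne_zero, ?_⟩
  · rw [← embGL2_mul, Matrix.mul_nonsing_inv _ hm, embGL2_one]
  · ext i j
    fin_cases i <;> fin_cases j <;>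
      simp [embGL2, J4, Matrix.mul_apply, Fin.sum_univ_four,
        Matrix.transpose_apply, Matrix.smul_apply, smul_eq_mul,
        Matrix.det_fin_two, Matrix.vecHead, Matrix.vecTail] <;> ring

lemma mapL0_le {k : Type*} [Field k] (g : Matrix (Fin 4) (Fin 4) k)
    (h1 : g 2 0 = 0) (h2 : g 3 0 = 0) (h3 : g 2 1 = 0) (h4 : g 3 1 = 0) :
    Submodule.map g.mulVecLin (L0 k) ≤ L0 k := by
  intro v hv
  rcases Submodule.mem_map.mp hv with ⟨u, hu, rfl⟩
  obtain ⟨hu2, hu3⟩ := (memL0_iff u).mp hu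
  rw [memL0_iff]
  constructor <;>
    simp [Matrix.mulVecLin_apply, Matrix.mulVec, dotProduct,
      Fin.sum_univ_four, h1, h2, h3, h4, hu2, hu3]

lemma mapL0_eq {k : Type*} [Field k] (g g' : Matrix (Fin 4) (Fin 4) k)
    (hgg' : g * g' = 1)
    (h1 : g 2 0 = 0) (h2 : g 3 0 = 0) (h3 : g 2 1 = 0) (h4 : g 3 1 = 0)
    (h1' : g' 2 0 = 0) (h2' : g' 3 0 = 0) (h3' : g' 2 1 = 0) (h4' : g' 3 1 = 0) :
    Submodule.map g.mulVecLin (L0 k) = L0 k := by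
  refine le_antisymm (mapL0_le g h1 h2 h3 h4) (fun v hv => ?_)
  refine Submodule.mem_map.mpr ⟨g'.mulVecLin v, ?_, ?_⟩
  · exact mapL0_le g' h1' h2' h3' h4' (Submodule.mem_map_of_mem hv)
  · simp [Matrix.mulVecLin_apply, Matrix.mulVec_mulVec, hgg', Matrix.one_mulVec]

set_option maxHeartbeats 2000000 in
/-- `P ∩ s₂·ι(H)·s₂⁻¹` equals the image of `GL(2,k)` under `embGL2`, and
`embGL2` is an injective group homomorphism from `GL(2,k)` into `GSp(4,k)`. -/
theorem statement12
    {k K : Type*} [Field k] [Field K] [Algebra k K]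
    (hchar : (2 : k) ≠ 0)
    (α : k) (hα : α ≠ 0) (hns : ¬ IsSquare α)
    (r : K) (hr : r * r = algebraMap k K α)
    (c1 c2 : K → k)
    (hrepr : ∀ x : K, x = algebraMap k K (c1 x) + algebraMap k K (c2 x) * r)
    (hindep : ∀ y1 y2 : k, algebraMap k K y1 + algebraMap k K y2 * r = 0 →
      y1 = 0 ∧ y2 = 0) :
    (∀ g : Matrix (Fin 4) (Fin 4) k,
      (g ∈ Pset k ∧ ∃ h : Matrix (Fin 2) (Fin 2) K,
          InH (k := k) h ∧ g = s2mat k * iota α c1 c2 h * (s2mat k)⁻¹)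
        ↔ ∃ m : Matrix (Fin 2) (Fin 2) k, IsUnit m.det ∧ g = embGL2 m)
    ∧ (∀ m : Matrix (Fin 2) (Fin 2) k, IsUnit m.det → IsGSp (embGL2 m))
    ∧ embGL2 (1 : Matrix (Fin 2) (Fin 2) k) = 1
    ∧ (∀ m m' : Matrix (Fin 2) (Fin 2) k, IsUnit m.det → IsUnit m'.det →
        embGL2 (m * m') = embGL2 m * embGL2 m')
    ∧ (∀ m m' : Matrix (Fin 2) (Fin 2) k, IsUnit m.det → IsUnit m'.det →
        embGL2 m = embGL2 m' → m = m') := by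
  -- basic facts about the coordinate functions c1, c2
  have hc : ∀ y1 y2 : k,
      c1 (algebraMap k K y1 + algebraMap k K y2 * r) = y1 ∧
      c2 (algebraMap k K y1 + algebraMap k K y2 * r) = y2 := by
    intro y1 y2
    have h := hrepr (algebraMap k K y1 + algebraMap k K y2 * r)
    have h0 : algebraMap k K (y1 - c1 (algebraMap k K y1 + algebraMap k K y2 * r))
        + algebraMap k K (y2 - c2 (algebraMap k K y1 + algebraMap k K y2 * r)) * r
        = 0 := by
      rw [map_sub, map_sub]
      linear_combination h
    obtain ⟨e1, e2⟩ := hindep _ _ h0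
    exact ⟨(sub_eq_zero.mp e1).symm, (sub_eq_zero.mp e2).symm⟩
  have hc1a : ∀ y : k, c1 (algebraMap k K y) = y := fun y => by
    simpa using (hc y 0).1
  have hc2a : ∀ y : k, c2 (algebraMap k K y) = 0 := fun y => by
    simpa using (hc y 0).2
  have hc1r : ∀ y : k, c1 (algebraMap k K y * r) = 0 := fun y => by
    simpa using (hc 0 y).1
  have hc2r : ∀ y : k, c2 (algebraMap k K y * r) = y := fun y => by
    simpa using (hc 0 y).2
  refine ⟨?_, fun m hm => embGL2_isGSp m hm, embGL2_one,
    fun m m' _ _ => embGL2_mul m m', ?_⟩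
  · intro g
    constructor
    · rintro ⟨⟨hGSp, hmap⟩, h, ⟨d, hd, hdet⟩, hg⟩
      rw [s2_inv] at hg
      have he0 : (![1, 0, 0, 0] : Fin 4 → k) ∈ L0 k :=
        Submodule.subset_span (Set.mem_insert _ _)
      have he1 : (![0, 1, 0, 0] : Fin 4 → k) ∈ L0 k :=
        Submodule.subset_span (Set.mem_insert_of_mem _ rfl)
      have hcol0 := (memL0_iff _).mp (hmap ▸ Submodule.mem_map_of_mem he0)
      have hcol1 := (memL0_iff _).mp (hmap ▸ Submodule.mem_map_of_mem he1)
      rw [hg] at hcol0 hcol1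
      simp [Matrix.mulVecLin_apply, Matrix.mulVec, dotProduct,
        Fin.sum_univ_four, Matrix.mul_apply, s2mat, iota, s2T,
        Matrix.vecHead, Matrix.vecTail] at hcol0 hcol1
      obtain ⟨hz1, hx2⟩ := hcol0
      obtain ⟨hw2, hy1'⟩ := hcol1
      have hy1 : c1 (h 0 1) = 0 := by
        rcases hy1' with h' | h'
        · exact h'
        · exact absurd h' hα
      -- identify the entries of h
      have e00 : h 0 0 = algebraMap k K (c1 (h 0 0)) := by
        conv_lhs => rw [hrepr (h 0 0)]
        rw [hx2]; simp
      have e01 : h 0 1 = algebraMap k K (c2 (h 0 1)) * r := by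
        conv_lhs => rw [hrepr (h 0 1)]
        rw [hy1]; simp
      have e10 : h 1 0 = algebraMap k K (c2 (h 1 0)) * r := by
        conv_lhs => rw [hrepr (h 1 0)]
        rw [hz1]; simp
      have e11 : h 1 1 = algebraMap k K (c1 (h 1 1)) := by
        conv_lhs => rw [hrepr (h 1 1)]
        rw [hw2]; simp
      have hdet2 : algebraMap k K d =
          algebraMap k K (c1 (h 0 0) * c1 (h 1 1) - c2 (h 0 1) * c2 (h 1 0) * α) := by
        rw [← hdet, _root_.Matrix.det_fin_two]
        conv_lhs => rw [e00, e01, e10, e11]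
        rw [_root_.map_sub, _root_.map_mul, _root_.map_mul, _root_.map_mul]
        linear_combination
          (-(algebraMap k K (c2 (h 0 1)) * algebraMap k K (c2 (h 1 0)))) * hr
      have hdval : d = c1 (h 0 0) * c1 (h 1 1) - c2 (h 0 1) * c2 (h 1 0) * α := by
        have h0 : algebraMap k K
            (d - (c1 (h 0 0) * c1 (h 1 1) - c2 (h 0 1) * c2 (h 1 0) * α))
            + algebraMap k K 0 * r = 0 := by
          rw [map_sub, map_zero, hdet2]; ring
        exact sub_eq_zero.mp (hindep _ _ h0).1
      refine ⟨!![c1 (h 0 0), c2 (h 0 1); c2 (h 1 0) * α, c1 (h 1 1)], ?_, ?_⟩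
      · rw [Matrix.det_fin_two]
        simp only [Matrix.cons_val', Matrix.cons_val_zero, Matrix.cons_val_one,
          Matrix.head_cons, Matrix.empty_val', Matrix.cons_val_fin_one,
          Matrix.head_fin_const, Matrix.of_apply]
        rw [isUnit_iff_ne_zero]
        intro hzero
        apply hd
        rw [hdval]
        linear_combination hzero
      · rw [hg]
        ext i j
        fin_cases i <;> fin_cases j <;>
          simp [iota, s2mat, s2T, embGL2, Matrix.mul_apply, Fin.sum_univ_four,
            hz1, hx2, hw2, hy1, Matrix.vecHead, Matrix.vecTail] <;> ring
    · rintro ⟨m, hm, rfl⟩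
      have hinv : embGL2 m * embGL2 m⁻¹ = 1 := by
        rw [← embGL2_mul, Matrix.mul_nonsing_inv _ hm, embGL2_one]
      refine ⟨⟨embGL2_isGSp m hm, ?_⟩, ?_⟩
      · exact mapL0_eq _ (embGL2 m⁻¹) hinv
          (by simp [embGL2, Matrix.vecHead, Matrix.vecTail]) (by simp [embGL2, Matrix.vecHead, Matrix.vecTail]) (by simp [embGL2, Matrix.vecHead, Matrix.vecTail]) (by simp [embGL2, Matrix.vecHead, Matrix.vecTail])
          (by simp [embGL2, Matrix.vecHead, Matrix.vecTail]) (by simp [embGL2, Matrix.vecHead, Matrix.vecTail]) (by simp [embGL2, Matrix.vecHead, Matrix.vecTail]) (by simp [embGL2, Matrix.vecHead, Matrix.vecTail])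
      · refine ⟨!![algebraMap k K (m 0 0), algebraMap k K (m 0 1) * r;
            algebraMap k K (m 1 0 / α) * r, algebraMap k K (m 1 1)],
          ⟨m.det, hm.ne_zero, ?_⟩, ?_⟩
        · rw [Matrix.det_fin_two, Matrix.det_fin_two]
          simp only [Matrix.cons_val', Matrix.cons_val_zero, Matrix.cons_val_one,
            Matrix.head_cons, Matrix.empty_val', Matrix.cons_val_fin_one,
            Matrix.head_fin_const, Matrix.of_apply]
          rw [_root_.map_sub, _root_.map_mul, _root_.map_mul]
          have hcan : (m 1 0 / α) * α = m 1 0 := div_mul_cancel₀ _ hα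
          have : algebraMap k K (m 0 1) * algebraMap k K (m 1 0) =
              algebraMap k K (m 0 1) * algebraMap k K (m 1 0 / α) * (r * r) := by
            rw [hr, ← _root_.map_mul, ← _root_.map_mul, ← _root_.map_mul, mul_assoc, hcan]
          linear_combination this
        · have hc1r' : c1 ((algebraMap k K) (m 1 0) / (algebraMap k K) α * r) = 0 := by
            rw [← map_div₀]; exact hc1r _
          have hc2r' : c2 ((algebraMap k K) (m 1 0) / (algebraMap k K) α * r) = m 1 0 / α := by
            rw [← map_div₀]; exact hc2r _
          rw [s2_inv]
          ext i j
          fin_cases i <;> fin_cases j <;>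
            simp [iota, s2mat, s2T, embGL2, Matrix.mul_apply, Fin.sum_univ_four,
              hc1a, hc2a, hc1r, hc2r, hc1r', hc2r', Matrix.vecHead, Matrix.vecTail,
              div_mul_cancel₀, hα]
  · intro m m' _ _ hEq
    ext i j
    have h00 := congrFun (congrFun hEq 0) 0
    have h01 := congrFun (congrFun hEq 0) 1
    have h10 := congrFun (congrFun hEq 1) 0
    have h11 := congrFun (congrFun hEq 1) 1
    simp [embGL2] at h00 h01 h10 h11
    fin_cases i <;> fin_cases j <;> assumption
end

section
/- For every p ∈ P and h ∈ H, the dimension of the projection p₃₄(p·ι(h)·L₀) is either 0 or 2 (never 1); since dim p₃₄(s₂·L₀) = 1, it follows that s₂ ∉ P·ι(H). -/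
open Matrix

/-- The projection `p₃₄ : k⁴ → L₀*` onto the last two coordinates. -/
noncomputable def p34 (k : Type*) [Field k] : (Fin 4 → k) →ₗ[k] (Fin 4 → k) :=
  Matrix.mulVecLin !![0, 0, 0, 0; 0, 0, 0, 0; 0, 0, 1, 0; 0, 0, 0, 1]

private lemma mem_L0_coords' {k : Type*} [Field k] {x : Fin 4 → k}
    (hx : x ∈ Submodule.span k {(![1, 0, 0, 0] : Fin 4 → k), ![0, 1, 0, 0]}) :
    x 2 = 0 ∧ x 3 = 0 := by
  have hle : Submodule.span k {(![1, 0, 0, 0] : Fin 4 → k), ![0, 1, 0, 0]} ≤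
      LinearMap.ker ((LinearMap.proj 2 : (Fin 4 → k) →ₗ[k] k)) ⊓
      LinearMap.ker ((LinearMap.proj 3 : (Fin 4 → k) →ₗ[k] k)) := by
    rw [Submodule.span_le]
    rintro y (rfl | rfl) <;> simp [LinearMap.mem_ker]
  have := hle hx
  simp [LinearMap.mem_ker] at this
  exact this

private lemma finrank_span_pair4 {k : Type*} [Field k] (a b c d : k)
    (hd : a * d - b * c ≠ 0) :
    Module.finrank k ↥(Submodule.span k {(![0,0,a,b] : Fin 4 → k), ![0,0,c,d]}) = 2 := by
  have hli : LinearIndependent k ![(![0,0,a,b] : Fin 4 → k), ![0,0,c,d]] := by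
    rw [LinearIndependent.pair_iff]
    intro s t hst
    have h2 := congrFun hst 2
    have h3 := congrFun hst 3
    simp [Pi.add_apply, Pi.smul_apply, smul_eq_mul] at h2 h3
    constructor
    · have hs : s * (a * d - b * c) = 0 := by linear_combination d * h2 - c * h3
      exact (mul_eq_zero.1 hs).resolve_right hd
    · have ht : t * (a * d - b * c) = 0 := by linear_combination a * h3 - b * h2
      exact (mul_eq_zero.1 ht).resolve_right hd
  have hr : Set.range ![(![0,0,a,b] : Fin 4 → k), ![0,0,c,d]] =
      {(![0,0,a,b] : Fin 4 → k), ![0,0,c,d]} := by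
    ext x
    simp [Fin.exists_fin_two, eq_comm]
    tauto
  have := finrank_span_eq_card (R := k) hli
  rw [hr] at this
  simpa using this

private lemma det_four_block {k : Type*} [Field k] (p : Matrix (Fin 4) (Fin 4) k)
    (h20 : p 2 0 = 0) (h21 : p 2 1 = 0) (h30 : p 3 0 = 0) (h31 : p 3 1 = 0) :
    p.det = (p 0 0 * p 1 1 - p 0 1 * p 1 0) * (p 2 2 * p 3 3 - p 2 3 * p 3 2) := by
  simp [Matrix.det_succ_row_zero, Fin.sum_univ_succ, h20, h21, h30, h31,
    show (Fin.succ 2 : Fin 4) = 3 from rfl, show (Fin.succAbove 2 2 : Fin 4) = 3 from rfl,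
    show (Fin.castSucc 2 : Fin 4) = 2 from rfl, show (Fin.succAbove 1 2 : Fin 4) = 3 from rfl]
  ring


/-- For `p ∈ P`, `h ∈ H`, the dimension of `p₃₄(p·ι(h)·L₀)` is `0` or `2`,
never `1`; since `dim p₃₄(s₂·L₀) = 1`, it follows that `s₂ ∉ P·ι(H)`. -/
theorem statement15
    {k K : Type*} [Field k] [Field K] [Algebra k K]
    (hchar : (2 : k) ≠ 0)
    (α : k) (hα : α ≠ 0) (hns : ¬ IsSquare α)
    (r : K) (hr : r * r = algebraMap k K α)
    (c1 c2 : K → k)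
    (hrepr : ∀ x : K, x = algebraMap k K (c1 x) + algebraMap k K (c2 x) * r)
    (hindep : ∀ y1 y2 : k, algebraMap k K y1 + algebraMap k K y2 * r = 0 →
      y1 = 0 ∧ y2 = 0) :
    (∀ p ∈ Pset k, ∀ h : Matrix (Fin 2) (Fin 2) K, InH (k := k) h →
      Module.finrank k
          (Submodule.map (p34 k)
            (Submodule.map (p * iota α c1 c2 h).mulVecLin (L0 k))) = 0
      ∨ Module.finrank k
          (Submodule.map (p34 k)
            (Submodule.map (p * iota α c1 c2 h).mulVecLin (L0 k))) = 2)
    ∧ Module.finrank k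
        (Submodule.map (p34 k) (Submodule.map (s2mat k).mulVecLin (L0 k))) = 1
    ∧ ¬ ∃ p ∈ Pset k, ∃ h : Matrix (Fin 2) (Fin 2) K,
        InH (k := k) h ∧ s2mat k = p * iota α c1 c2 h := by
    classical
  have part2 : Module.finrank k
      (Submodule.map (p34 k) (Submodule.map (s2mat k).mulVecLin (L0 k))) = 1 := by
    have hv1 : p34 k ((s2mat k).mulVecLin ![1,0,0,0]) = (0 : Fin 4 → k) := by
      funext i
      fin_cases i <;>
        simp [p34, s2mat, Matrix.mulVecLin_apply, Matrix.mulVec, dotProduct, Fin.sum_univ_four]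
    have hv2 : p34 k ((s2mat k).mulVecLin ![0,1,0,0]) = ![0,0,0,(-1 : k)] := by
      funext i
      fin_cases i <;>
        simp [p34, s2mat, Matrix.mulVecLin_apply, Matrix.mulVec, dotProduct, Fin.sum_univ_four]
    rw [L0, Submodule.map_span, Submodule.map_span, Set.image_pair, Set.image_pair, hv1, hv2,
      Submodule.span_insert_zero]
    apply finrank_span_singleton
    intro h0
    have := congrFun h0 3
    simp at this
  have part1 : ∀ p ∈ Pset k, ∀ h : Matrix (Fin 2) (Fin 2) K, InH (k := k) h →
      Module.finrank k
          (Submodule.map (p34 k)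
            (Submodule.map (p * iota α c1 c2 h).mulVecLin (L0 k))) = 0
      ∨ Module.finrank k
          (Submodule.map (p34 k)
            (Submodule.map (p * iota α c1 c2 h).mulVecLin (L0 k))) = 2 := by
    intro p hp h _
    obtain ⟨⟨hdet, -⟩, hL⟩ := hp
    have he1 : (![1,0,0,0] : Fin 4 → k) ∈ L0 k := Submodule.subset_span (by simp)
    have he2 : (![0,1,0,0] : Fin 4 → k) ∈ L0 k := Submodule.subset_span (by simp)
    have hc1 : p.mulVecLin ![1,0,0,0] ∈ L0 k := hL ▸ Submodule.mem_map_of_mem he1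
    have hc2 : p.mulVecLin ![0,1,0,0] ∈ L0 k := hL ▸ Submodule.mem_map_of_mem he2
    have hmv1 : ∀ i, p.mulVecLin ![1,0,0,0] i = p i 0 := by
      intro i
      simp [Matrix.mulVecLin_apply, Matrix.mulVec, dotProduct, Fin.sum_univ_four]
    have hmv2 : ∀ i, p.mulVecLin ![0,1,0,0] i = p i 1 := by
      intro i
      simp [Matrix.mulVecLin_apply, Matrix.mulVec, dotProduct, Fin.sum_univ_four]
    have hz1 := mem_L0_coords' (k := k) (by rw [← L0]; exact hc1)
    have hz2 := mem_L0_coords' (k := k) (by rw [← L0]; exact hc2)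
    have h20 : p 2 0 = 0 := by rw [← hmv1 2]; exact hz1.1
    have h30 : p 3 0 = 0 := by rw [← hmv1 3]; exact hz1.2
    have h21 : p 2 1 = 0 := by rw [← hmv2 2]; exact hz2.1
    have h31 : p 3 1 = 0 := by rw [← hmv2 3]; exact hz2.2
    have hD : p 2 2 * p 3 3 - p 2 3 * p 3 2 ≠ 0 := by
      intro h0
      have hd0 : p.det = 0 := by
        rw [det_four_block p h20 h21 h30 h31, h0, mul_zero]
      exact hdet.ne_zero hd0
    set A := c1 (h 1 0) with hA
    set B := c2 (h 1 0) with hB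
    have hv1 : p34 k ((p * iota α c1 c2 h).mulVecLin ![1,0,0,0]) =
        ![0, 0, p 2 2 * A + p 2 3 * (B * α), p 3 2 * A + p 3 3 * (B * α)] := by
      funext i
      fin_cases i <;>
        simp [p34, iota, Matrix.mulVecLin_apply, Matrix.mulVec, dotProduct,
          Matrix.mul_apply, Fin.sum_univ_four, h20, h21, h30, h31, ← hA, ← hB] <;>
        ring
    have hv2 : p34 k ((p * iota α c1 c2 h).mulVecLin ![0,1,0,0]) =
        ![0, 0, p 2 2 * (B * α) + p 2 3 * (A * α), p 3 2 * (B * α) + p 3 3 * (A * α)] := by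
      funext i
      fin_cases i <;>
        simp [p34, iota, Matrix.mulVecLin_apply, Matrix.mulVec, dotProduct,
          Matrix.mul_apply, Fin.sum_univ_four, h20, h21, h30, h31, ← hA, ← hB] <;>
        ring
    have hmap : Submodule.map (p34 k)
        (Submodule.map (p * iota α c1 c2 h).mulVecLin (L0 k)) =
        Submodule.span k {![0, 0, p 2 2 * A + p 2 3 * (B * α), p 3 2 * A + p 3 3 * (B * α)],
          ![0, 0, p 2 2 * (B * α) + p 2 3 * (A * α), p 3 2 * (B * α) + p 3 3 * (A * α)]} := by
      rw [L0, Submodule.map_span, Submodule.map_span, Set.image_pair, Set.image_pair, hv1, hv2]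
    by_cases hc : h 1 0 = 0
    · left
      have hAB : A = 0 ∧ B = 0 := by
        apply hindep
        rw [← hrepr (h 1 0), hc]
      have hw1 : (![0, 0, p 2 2 * A + p 2 3 * (B * α), p 3 2 * A + p 3 3 * (B * α)] :
          Fin 4 → k) = 0 := by
        funext i; fin_cases i <;> simp [hAB.1, hAB.2]
      have hw2 : (![0, 0, p 2 2 * (B * α) + p 2 3 * (A * α),
          p 3 2 * (B * α) + p 3 3 * (A * α)] : Fin 4 → k) = 0 := by
        funext i; fin_cases i <;> simp [hAB.1, hAB.2]
      rw [hmap, hw1, hw2]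
      simp [Submodule.span_insert_zero, Submodule.span_zero_singleton]
    · right
      have hABne : A * A - α * (B * B) ≠ 0 := by
        intro h0
        by_cases hBz : B = 0
        · have hAz : A = 0 := by
            have : A * A = 0 := by rw [hBz] at h0; linear_combination h0
            exact mul_self_eq_zero.1 this
          apply hc
          rw [hrepr (h 1 0), ← hA, ← hB, hAz, hBz]
          simp
        · apply hns
          refine ⟨A / B, ?_⟩
          field_simp
          linear_combination -h0
      rw [hmap]
      apply finrank_span_pair4
      have key : (p 2 2 * A + p 2 3 * (B * α)) * (p 3 2 * (B * α) + p 3 3 * (A * α)) -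
          (p 3 2 * A + p 3 3 * (B * α)) * (p 2 2 * (B * α) + p 2 3 * (A * α)) =
          (p 2 2 * p 3 3 - p 2 3 * p 3 2) * (α * (A * A - α * (B * B))) := by ring
      rw [key]
      exact mul_ne_zero hD (mul_ne_zero hα hABne)
  refine ⟨part1, part2, ?_⟩
  rintro ⟨p, hp, h, hH, heq⟩
  rcases part1 p hp h hH with h0 | h2
  · rw [← heq] at h0
    rw [part2] at h0
    exact one_ne_zero h0
  · rw [← heq] at h2
    rw [part2] at h2
    exact OfNat.one_ne_ofNat 2 h2
end

section
/- The subgroup T̃·Ñ of GSp(4,k) is normalized by T and by S: for every x_λ ∈ T, s ∈ S, and g ∈ T̃·Ñ, both x_λ·g·x_λ⁻¹ and s·g·s⁻¹ lie in T̃·Ñ. In particular T̃·Ñ is normalized by the subgroup generated by T and S. -/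
open Matrix

/-- The subgroup `T̃·Ñ`, as the set of products `t̃·ñ`. -/
def TtNt {k K : Type*} [Field k] [Field K] (α : k) (c1 c2 : K → k) :
    Set (Matrix (Fin 4) (Fin 4) k) :=
  {g | ∃ t ∈ Ttilde (K := K) α c1 c2, ∃ n ∈ Ntset k α, g = t * n}


set_option maxHeartbeats 2000000 in
private def Xmat {k : Type*} [Field k] (lam : k) : Matrix (Fin 4) (Fin 4) k :=
  !![lam, 0, 0, 0; 0, lam, 0, 0; 0, 0, 1, 0; 0, 0, 0, 1]

private def Nmat {k : Type*} [Field k] (α b1 b2 : k) : Matrix (Fin 4) (Fin 4) k :=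
  !![1, 0, b1, b2; 0, 1, b2, b1 / α; 0, 0, 1, 0; 0, 0, 0, 1]

private def Smat {k : Type*} [Field k] (α c : k) : Matrix (Fin 4) (Fin 4) k :=
  !![1, 0, c, 0; 0, 1, 0, -c / α; 0, 0, 1, 0; 0, 0, 0, 1]

set_option maxHeartbeats 2000000 in
private lemma xinv {k : Type*} [Field k] (lam : k) (h : lam ≠ 0) :
    (Xmat lam)⁻¹ = Xmat lam⁻¹ := by
  apply Matrix.inv_eq_right_inv
  ext i j
  fin_cases i <;> fin_cases j <;>
    simp [Xmat, Matrix.mul_apply, Fin.sum_univ_four, Matrix.one_apply, Matrix.vecHead,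
      Matrix.vecTail, h]

set_option maxHeartbeats 2000000 in
private lemma sinv {k : Type*} [Field k] (α c : k) :
    (Smat α c)⁻¹ = Smat α (-c) := by
  apply Matrix.inv_eq_right_inv
  ext i j
  fin_cases i <;> fin_cases j <;>
    simp [Smat, Matrix.mul_apply, Fin.sum_univ_four, Matrix.one_apply, Matrix.vecHead,
      Matrix.vecTail, neg_div]

set_option maxHeartbeats 2000000 in
private lemma keyX {k : Type*} [Field k] (α a1 a2 b1 b2 lam : k) (h : lam ≠ 0) :
    Xmat lam * (ttilde α a1 a2 * Nmat α b1 b2) * Xmat lam⁻¹ =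
      ttilde α a1 a2 * Nmat α (lam * b1) (lam * b2) := by
  ext i j
  fin_cases i <;> fin_cases j <;>
    simp [Xmat, ttilde, Nmat, Matrix.mul_apply, Fin.sum_univ_four, Matrix.vecHead,
      Matrix.vecTail] <;>
    (try field_simp) <;> ring

set_option maxHeartbeats 2000000 in
private lemma keyS {k : Type*} [Field k] (α a1 a2 b1 b2 c : k) (hα : α ≠ 0) :
    Smat α c * (ttilde α a1 a2 * Nmat α b1 b2) * Smat α (-c) =
      ttilde α a1 a2 * Nmat α b1 b2 := by
  ext i j
  fin_cases i <;> fin_cases j <;>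
    simp [Smat, ttilde, Nmat, Matrix.mul_apply, Fin.sum_univ_four, Matrix.vecHead,
      Matrix.vecTail] <;>
    (try field_simp) <;> ring

/-- `T̃·Ñ` is normalized by `T` and by `S`; in particular it is normalized by
the subgroup generated by `T` and `S`. -/
theorem statement16
    {k K : Type*} [Field k] [Field K] [Algebra k K]
    (hchar : (2 : k) ≠ 0)
    (α : k) (hα : α ≠ 0) (hns : ¬ IsSquare α)
    (r : K) (hr : r * r = algebraMap k K α)
    (c1 c2 : K → k)
    (hrepr : ∀ x : K, x = algebraMap k K (c1 x) + algebraMap k K (c2 x) * r)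
    (hindep : ∀ y1 y2 : k, algebraMap k K y1 + algebraMap k K y2 * r = 0 →
      y1 = 0 ∧ y2 = 0) :
    (∀ x ∈ Tset k, ∀ g ∈ TtNt (K := K) α c1 c2,
        x * g * x⁻¹ ∈ TtNt (K := K) α c1 c2)
    ∧ (∀ s ∈ Sset k α, ∀ g ∈ TtNt (K := K) α c1 c2,
        s * g * s⁻¹ ∈ TtNt (K := K) α c1 c2)
    ∧ (∀ u ∈ Submonoid.closure (Tset k ∪ Sset k α),
        ∀ g ∈ TtNt (K := K) α c1 c2, u * g * u⁻¹ ∈ TtNt (K := K) α c1 c2) := by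
  have hT : ∀ x ∈ Tset k, ∀ g ∈ TtNt (K := K) α c1 c2,
      x * g * x⁻¹ ∈ TtNt (K := K) α c1 c2 := by
    rintro x ⟨lam, hlam, rfl⟩ g ⟨t, ⟨a, ha, rfl⟩, n, ⟨b1, b2, rfl⟩, rfl⟩
    show Xmat lam * (ttilde α (c1 a) (c2 a) * Nmat α b1 b2) * (Xmat lam)⁻¹ ∈ _
    rw [xinv lam hlam]
    exact ⟨_, ⟨a, ha, rfl⟩, _, ⟨lam * b1, lam * b2, rfl⟩,
      keyX α (c1 a) (c2 a) b1 b2 lam hlam⟩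
  have hS : ∀ s ∈ Sset k α, ∀ g ∈ TtNt (K := K) α c1 c2,
      s * g * s⁻¹ ∈ TtNt (K := K) α c1 c2 := by
    rintro s ⟨c, rfl⟩ g ⟨t, ⟨a, ha, rfl⟩, n, ⟨b1, b2, rfl⟩, rfl⟩
    show Smat α c * (ttilde α (c1 a) (c2 a) * Nmat α b1 b2) * (Smat α c)⁻¹ ∈ _
    rw [sinv]
    exact ⟨_, ⟨a, ha, rfl⟩, _, ⟨b1, b2, rfl⟩, keyS α (c1 a) (c2 a) b1 b2 c hα⟩
  refine ⟨hT, hS, ?_⟩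
  intro u hu
  induction hu using Submonoid.closure_induction with
  | mem x hx =>
    rcases hx with hx | hx
    · exact hT x hx
    · exact hS x hx
  | one =>
    intro g hg
    simpa using hg
  | mul x y hx hy ihx ihy =>
    intro g hg
    rw [Matrix.mul_inv_rev]
    have h : x * y * g * (y⁻¹ * x⁻¹) = x * (y * g * y⁻¹) * x⁻¹ := by
      noncomm_ring
    rw [h]
    exact ihx _ (ihy g hg)
end
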